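/- arXiv:1908.01520 — 7 statements merged into one kernel-verified Lean document; each statement's English description precedes it below -/
import Mathlib

section
/- Let f : [0,T] → [0,∞) be continuous and g : [0,T] → [0,∞) be such that f(t) ≤ f(0) + ∫₀ᵗ (e^{-γ(t-s)}/√(t-s)) f(s)² ds + g(t) for all 0 ≤ t ≤ T, where γ > 0. Set A = (9 ∫₀^∞ e^{-γs}/√s ds)^{-1}. Then for every 0 < δ ≤ A, if f(0) ≤ δ and sup_{t∈[0,T]} g(t) ≤ δ, then sup_{t∈[0,T]} f(t) ≤ 3δ. -/
open MeasureTheory Set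


theorem kernel_integrable' (γ : ℝ) (hγ : 0 < γ) :
    IntegrableOn (fun s => Real.exp (-γ * s) / Real.sqrt s) (Ioi 0) := by
  have hmeas : AEStronglyMeasurable (fun s => Real.exp (-γ * s) / Real.sqrt s)
      (volume.restrict (Ioi (0:ℝ))) :=
    (Measurable.aestronglyMeasurable
      ((Real.measurable_exp.comp (measurable_const.mul measurable_id)).div
        measurable_id.sqrt)).restrict
  have h1 : IntegrableOn (fun s => Real.exp (-γ * s) / Real.sqrt s) (Ioc 0 1) := by
    have hb : IntegrableOn (fun s : ℝ => s ^ (-(1:ℝ)/2)) (Ioc 0 1) := by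
      have := intervalIntegral.intervalIntegrable_rpow' (a := 0) (b := 1)
        (r := -(1:ℝ)/2) (by norm_num)
      simpa [intervalIntegrable_iff_integrableOn_Ioc_of_le (by norm_num : (0:ℝ) ≤ 1)] using this
    refine Integrable.mono hb (hmeas.mono_set Ioc_subset_Ioi_self) ?_
    filter_upwards [ae_restrict_mem measurableSet_Ioc] with s hs
    obtain ⟨hs0, hs1⟩ := hs
    rw [Real.norm_eq_abs, Real.norm_eq_abs, abs_of_nonneg (by positivity),
      abs_of_nonneg (by positivity : (0:ℝ) ≤ s ^ (-(1:ℝ)/2))]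
    have hrw : s ^ (-(1:ℝ)/2) = 1 / Real.sqrt s := by
      rw [Real.sqrt_eq_rpow, one_div, ← Real.rpow_neg hs0.le]; norm_num
    rw [hrw]
    gcongr
    exact Real.exp_le_one_iff.2 (by nlinarith)
  have h2 : IntegrableOn (fun s => Real.exp (-γ * s) / Real.sqrt s) (Ioi 1) := by
    refine Integrable.mono (exp_neg_integrableOn_Ioi 1 hγ)
      (hmeas.mono_set (Ioi_subset_Ioi (by norm_num))) ?_
    filter_upwards [ae_restrict_mem measurableSet_Ioi] with s hs
    rw [mem_Ioi] at hs
    rw [Real.norm_eq_abs, Real.norm_eq_abs, abs_of_nonneg (by positivity),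
      abs_of_nonneg (Real.exp_pos _).le]
    rw [div_le_iff₀ (Real.sqrt_pos.2 (by linarith))]
    have h1s : (1:ℝ) ≤ Real.sqrt s := by
      rw [show (1:ℝ) = Real.sqrt 1 by simp]
      exact Real.sqrt_le_sqrt hs.le
    nlinarith [Real.exp_pos (-γ * s)]
  rw [← Ioc_union_Ioi_eq_Ioi (by norm_num : (0:ℝ) ≤ 1)]
  exact h1.union h2

/-- Gronwall-type lemma with exponentially damped singular kernel (γ > 0 case). -/
theorem gronwall_singular_kernel_exp (T γ : ℝ) (hT : 0 < T) (hγ : 0 < γ)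
    (f g : ℝ → ℝ) (hf : ContinuousOn f (Icc 0 T))
    (hf0 : ∀ t ∈ Icc 0 T, 0 ≤ f t) (hg0 : ∀ t ∈ Icc 0 T, 0 ≤ g t)
    (hineq : ∀ t ∈ Icc 0 T,
      f t ≤ f 0 + (∫ s in (0:ℝ)..t, Real.exp (-γ * (t - s)) / Real.sqrt (t - s) * (f s) ^ 2)
        + g t)
    (A : ℝ) (hA : A = (9 * ∫ s in Ioi (0:ℝ), Real.exp (-γ * s) / Real.sqrt s)⁻¹)
    (δ : ℝ) (hδ : 0 < δ) (hδA : δ ≤ A)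
    (h0 : f 0 ≤ δ) (hgδ : ∀ t ∈ Icc 0 T, g t ≤ δ) :
    ∀ t ∈ Icc 0 T, f t ≤ 3 * δ := by
  set K : ℝ → ℝ := fun s => Real.exp (-γ * s) / Real.sqrt s with hK
  set I : ℝ := ∫ s in Ioi (0:ℝ), K s with hIdef
  have hKint : IntegrableOn K (Ioi 0) := kernel_integrable' γ hγ
  rw [hA] at hδA
  have hKnn : ∀ s, 0 ≤ K s := fun s => by
    simp only [hK]; positivity
  have hI0 : 0 ≤ I := setIntegral_nonneg measurableSet_Ioi fun s _ => hKnn s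
  have hIpos : 0 < I := by
    by_contra h
    push_neg at h
    have hI : I = 0 := le_antisymm h hI0
    rw [hI] at hδA
    norm_num at hδA
    linarith
  have h9 : 9 * δ * I ≤ 1 := by
    have := mul_le_mul_of_nonneg_right hδA (by positivity : (0:ℝ) ≤ 9 * I)
    rw [inv_mul_cancel₀ (by positivity : (9:ℝ) * I ≠ 0)] at this
    linarith [this, show δ * (9 * I) = 9 * δ * I from by ring]
  -- key estimate
  have hkey : ∀ t ∈ Icc 0 T, ∀ c : ℝ, 0 ≤ c → (∀ s ∈ Ico 0 t, f s ≤ c) →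
      (∫ s in (0:ℝ)..t, Real.exp (-γ * (t - s)) / Real.sqrt (t - s) * (f s) ^ 2)
        ≤ c ^ 2 * I := by
    intro t ht c hc hfc
    have ht0 : 0 ≤ t := ht.1
    have hKIt : IntervalIntegrable K volume 0 t := by
      rw [intervalIntegrable_iff_integrableOn_Ioc_of_le ht0]
      exact hKint.mono_set Ioc_subset_Ioi_self
    have hKts : IntervalIntegrable (fun s => K (t - s)) volume 0 t := by
      simpa using (hKIt.comp_sub_left t).symm
    have h2 : IntervalIntegrable (fun s => c ^ 2 * K (t - s)) volume 0 t :=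
      hKts.const_mul _
    have hptwise : ∀ s ∈ Icc 0 t, K (t - s) * (f s) ^ 2 ≤ c ^ 2 * K (t - s) := by
      intro s hs
      rcases eq_or_lt_of_le hs.2 with heq | hlt
      · subst heq
        simp [hK, Real.sqrt_zero]
      · have hfs : f s ≤ c := hfc s ⟨hs.1, hlt⟩
        have hfs0 : 0 ≤ f s := hf0 s ⟨hs.1, le_trans hs.2 ht.2⟩
        have : (f s) ^ 2 ≤ c ^ 2 := by nlinarith
        calc K (t - s) * (f s) ^ 2 ≤ K (t - s) * c ^ 2 :=
              mul_le_mul_of_nonneg_left this (hKnn _)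
          _ = c ^ 2 * K (t - s) := mul_comm _ _
    have h1 : IntervalIntegrable (fun s => K (t - s) * (f s) ^ 2) volume 0 t := by
      rw [intervalIntegrable_iff_integrableOn_Ioc_of_le ht0]
      have hmK : Measurable K :=
        (Real.measurable_exp.comp (measurable_const.mul measurable_id)).div
          measurable_id.sqrt
      have hmeasf : AEMeasurable f (volume.restrict (Ioc 0 t)) :=
        (hf.mono (Ioc_subset_Icc_self.trans (Icc_subset_Icc le_rfl ht.2))).aemeasurable
          measurableSet_Ioc
      have hmeas : AEStronglyMeasurable (fun s => K (t - s) * (f s) ^ 2)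
          (volume.restrict (Ioc 0 t)) :=
        (((hmK.comp (measurable_const.sub measurable_id)).aemeasurable).mul
          (hmeasf.pow_const 2)).aestronglyMeasurable
      refine Integrable.mono ((intervalIntegrable_iff_integrableOn_Ioc_of_le ht0).1 h2)
        hmeas ?_
      filter_upwards [ae_restrict_mem measurableSet_Ioc] with s hs
      have h := hptwise s ⟨hs.1.le, hs.2⟩
      rw [Real.norm_eq_abs, Real.norm_eq_abs,
        abs_of_nonneg (by positivity : (0:ℝ) ≤ c ^ 2 * K (t - s)),
        abs_of_nonneg (mul_nonneg (hKnn _) (by positivity))]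
      exact h
    calc (∫ s in (0:ℝ)..t, Real.exp (-γ * (t - s)) / Real.sqrt (t - s) * (f s) ^ 2)
        = ∫ s in (0:ℝ)..t, K (t - s) * (f s) ^ 2 := rfl
      _ ≤ ∫ s in (0:ℝ)..t, c ^ 2 * K (t - s) :=
          intervalIntegral.integral_mono_on ht0 h1 h2 hptwise
      _ = c ^ 2 * ∫ s in (0:ℝ)..t, K (t - s) := intervalIntegral.integral_const_mul _ _
      _ = c ^ 2 * ∫ u in (0:ℝ)..t, K u := by
          rw [intervalIntegral.integral_comp_sub_left K t]; norm_num
      _ ≤ c ^ 2 * I := by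
          gcongr
          rw [intervalIntegral.integral_of_le ht0]
          exact setIntegral_mono_set hKint (Filter.Eventually.of_forall fun s => hKnn s)
            (HasSubset.Subset.eventuallyLE Ioc_subset_Ioi_self)
  -- main bound for each small ε
  have main : ∀ ε : ℝ, 0 < ε → ε * I < 1/3 → ∀ t ∈ Icc 0 T, f t < 3 * δ + ε := by
    intro ε hε hεI
    by_contra h
    push_neg at h
    obtain ⟨t₁, ht₁, ht₁'⟩ := h
    set B : Set ℝ := Icc 0 T ∩ f ⁻¹' (Ici (3 * δ + ε)) with hB
    have hBne : B.Nonempty := ⟨t₁, ht₁, ht₁'⟩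
    have hBclosed : IsClosed B :=
      hf.preimage_isClosed_of_isClosed isClosed_Icc isClosed_Ici
    have hBbdd : BddBelow B := ⟨0, fun x hx => hx.1.1⟩
    set t₀ := sInf B with ht₀def
    have ht₀B : t₀ ∈ B := hBclosed.csInf_mem hBne hBbdd
    obtain ⟨ht₀Icc, ht₀f⟩ := ht₀B
    have ht₀f' : 3 * δ + ε ≤ f t₀ := ht₀f
    have ht₀pos : 0 < t₀ := by
      rcases eq_or_lt_of_le ht₀Icc.1 with h | h
      · exfalso; rw [← h] at ht₀f'; linarith
      · exact h
    have hfc : ∀ s ∈ Ico 0 t₀, f s ≤ 3 * δ + ε := by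
      intro s hs
      by_contra hcon
      push_neg at hcon
      have hsB : s ∈ B := ⟨⟨hs.1, le_trans hs.2.le ht₀Icc.2⟩, hcon.le⟩
      exact absurd (csInf_le hBbdd hsB) (not_le.2 hs.2)
    have hint := hkey t₀ ht₀Icc (3 * δ + ε) (by positivity) hfc
    have hft₀ := hineq t₀ ht₀Icc
    have hg₀ := hgδ t₀ ht₀Icc
    have e1 : 9 * δ^2 * I ≤ δ := by nlinarith
    have e2 : 6 * δ * ε * I ≤ (2/3) * ε := by nlinarith
    have e3 : ε^2 * I < ε/3 := by nlinarith
    have expand : (3 * δ + ε)^2 * I = 9 * δ^2 * I + 6 * δ * ε * I + ε^2 * I := by ring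
    linarith
  -- conclude
  intro t ht
  by_contra h
  push_neg at h
  set ε := min ((6 * I)⁻¹) ((f t - 3 * δ)/2) with hε
  have hεpos : 0 < ε := lt_min (by positivity) (by linarith)
  have hεI : ε * I < 1/3 := by
    have h1 : ε ≤ (6 * I)⁻¹ := min_le_left _ _
    calc ε * I ≤ (6 * I)⁻¹ * I := mul_le_mul_of_nonneg_right h1 hI0
      _ = 1/6 := by field_simp
      _ < 1/3 := by norm_num
  have := main ε hεpos hεI t ht
  have h2 : ε ≤ (f t - 3 * δ)/2 := min_le_right _ _
  linarith
end

section
/- Let f : [0,T] → [0,∞) be continuous and g : [0,T] → [0,∞) with f(t) ≤ f(0) + ∫₀ᵗ f(s)²/√(t-s) ds + g(t) for all t ∈ [0,T]. Then for every 0 < δ ≤ 1/(18√T), if f(0) ≤ δ and sup_{t∈[0,T]} g(t) ≤ δ, then sup_{t∈[0,T]} f(t) ≤ 3δ. -/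
open MeasureTheory Set

private lemma one_div_sqrt_eq (x : ℝ) : 1 / Real.sqrt x = x ^ (-(1/2) : ℝ) := by
  rcases le_or_gt x 0 with h | h
  · rcases lt_or_eq_of_le h with h' | h'
    · have h2 : Real.cos (-(1/2) * Real.pi) = 0 := by
        rw [show (-(1/2) : ℝ) * Real.pi = -(Real.pi/2) by ring, Real.cos_neg,
          Real.cos_pi_div_two]
      rw [Real.sqrt_eq_zero'.mpr h, Real.rpow_def_of_neg h', h2, mul_zero, div_zero]
    · subst h'
      simp [Real.zero_rpow (by norm_num : (-(1/2) : ℝ) ≠ 0)]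
  · rw [Real.sqrt_eq_rpow, one_div, ← Real.rpow_neg h.le]

private lemma kernel_integrable (c : ℝ) :
    IntervalIntegrable (fun s => (c - s) ^ (-(1/2) : ℝ)) volume 0 c := by
  have h := intervalIntegral.intervalIntegrable_rpow' (a := 0) (b := c)
    (by norm_num : (-1 : ℝ) < -(1/2))
  simpa using (h.comp_sub_left c).symm

private lemma kernel_integral (c : ℝ) (hc : 0 ≤ c) :
    (∫ s in (0:ℝ)..c, (c - s) ^ (-(1/2) : ℝ)) = 2 * Real.sqrt c := by
  rw [intervalIntegral.integral_comp_sub_left (fun u => u ^ (-(1/2) : ℝ)) c]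
  simp only [sub_zero, sub_self]
  rw [integral_rpow (Or.inl (by norm_num : (-1 : ℝ) < -(1/2)))]
  have : (-(1/2) : ℝ) + 1 = 1/2 := by norm_num
  rw [this, Real.zero_rpow (by norm_num : (1/2 : ℝ) ≠ 0), ← Real.sqrt_eq_rpow]
  ring

/-- Gronwall-type lemma with singular kernel 1/√(t-s) (γ = 0 case). -/
theorem gronwall_singular_kernel (T : ℝ) (hT : 0 < T)
    (f g : ℝ → ℝ) (hf : ContinuousOn f (Icc 0 T))
    (hf0 : ∀ t ∈ Icc 0 T, 0 ≤ f t) (hg0 : ∀ t ∈ Icc 0 T, 0 ≤ g t)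
    (hineq : ∀ t ∈ Icc 0 T,
      f t ≤ f 0 + (∫ s in (0:ℝ)..t, (f s) ^ 2 / Real.sqrt (t - s)) + g t)
    (δ : ℝ) (hδ : 0 < δ) (hδA : δ ≤ 1 / (18 * Real.sqrt T))
    (h0 : f 0 ≤ δ) (hgδ : ∀ t ∈ Icc 0 T, g t ≤ δ) :
    ∀ t ∈ Icc 0 T, f t ≤ 3 * δ := by
  -- The set where f reaches 3δ
  set A : Set ℝ := Icc 0 T ∩ f ⁻¹' (Ici (3 * δ)) with hA
  have hsqrtT : 0 < Real.sqrt T := Real.sqrt_pos.mpr hT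
  have h18 : 18 * Real.sqrt T * δ ≤ 1 := by
    rw [le_div_iff₀ (by positivity)] at hδA
    linarith [hδA]
  intro t ht
  by_cases hAe : A = ∅
  · by_contra hcon
    push_neg at hcon
    have : t ∈ A := ⟨ht, le_of_lt hcon⟩
    rw [hAe] at this
    exact this
  · have hAne : A.Nonempty := nonempty_iff_ne_empty.mpr hAe
    have hAclosed : IsClosed A :=
      hf.preimage_isClosed_of_isClosed isClosed_Icc isClosed_Ici
    have hAcpt : IsCompact A :=
      isCompact_Icc.of_isClosed_subset hAclosed inter_subset_left
    have htA : sInf A ∈ A := hAcpt.sInf_mem hAne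
    set c := sInf A with hc
    obtain ⟨hcIcc, hcf⟩ := htA
    have hcf : 3 * δ ≤ f c := hcf
    -- c > 0
    have hcpos : 0 < c := by
      rcases lt_or_eq_of_le hcIcc.1 with h | h
      · exact h
      · exfalso
        rw [← h] at hcf
        linarith
    -- below c, f < 3δ
    have hlt : ∀ s, s ∈ Ico (0:ℝ) c → f s ≤ 3 * δ := by
      intro s hs
      by_contra hcon
      push_neg at hcon
      have : s ∈ A := ⟨⟨hs.1, le_trans hs.2.le hcIcc.2⟩, le_of_lt hcon⟩
      exact absurd (csInf_le hAcpt.bddBelow this) (not_le.mpr hs.2)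
    -- f c ≤ 3δ by continuity from the left
    have hfc_le : f c ≤ 3 * δ := by
      have hsub : Ico (0:ℝ) c ⊆ Icc 0 T := fun x hx =>
        ⟨hx.1, le_trans hx.2.le hcIcc.2⟩
      have htend : Filter.Tendsto f (nhdsWithin c (Ico 0 c)) (nhds (f c)) :=
        (hf.continuousWithinAt ⟨hcIcc.1, hcIcc.2⟩).mono hsub
      have hnb : (nhdsWithin c (Ico (0:ℝ) c)).NeBot := by
        apply mem_closure_iff_nhdsWithin_neBot.1
        rw [closure_Ico hcpos.ne]
        exact ⟨hcpos.le, le_refl _⟩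
      exact le_of_tendsto htend
        (Filter.eventually_iff_exists_mem.2 ⟨Ico 0 c, self_mem_nhdsWithin,
          fun s hs => hlt s hs⟩)
    -- bound on [0, c]
    have hbd : ∀ s ∈ Icc (0:ℝ) c, f s ≤ 3 * δ := by
      intro s hs
      rcases lt_or_eq_of_le hs.2 with h | h
      · exact hlt s ⟨hs.1, h⟩
      · rw [h]; exact hfc_le
    -- the integral bound
    have hker := kernel_integrable c
    have hker9 : IntervalIntegrable
        (fun s => 9 * δ^2 * (c - s) ^ (-(1/2) : ℝ)) volume 0 c :=
      hker.const_mul _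
    have hIbd : (∫ s in (0:ℝ)..c, (f s) ^ 2 / Real.sqrt (c - s))
        ≤ 18 * δ^2 * Real.sqrt c := by
      have hval : (∫ s in (0:ℝ)..c, 9 * δ^2 * (c - s) ^ (-(1/2) : ℝ))
          = 18 * δ^2 * Real.sqrt c := by
        rw [intervalIntegral.integral_const_mul, kernel_integral c hcpos.le]
        ring
      by_cases hint : IntervalIntegrable
          (fun s => (f s) ^ 2 / Real.sqrt (c - s)) volume 0 c
      · rw [← hval]
        apply intervalIntegral.integral_mono_on hcpos.le hint hker9
        intro s hs
        have h1 : (f s) ^ 2 ≤ 9 * δ^2 := by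
          have h2 := hbd s hs
          have h3 := hf0 s ⟨hs.1, le_trans hs.2 hcIcc.2⟩
          nlinarith
        have h4 : (0:ℝ) ≤ (c - s) ^ (-(1/2) : ℝ) :=
          Real.rpow_nonneg (by linarith [hs.2] : (0:ℝ) ≤ c - s) _
        calc (f s) ^ 2 / Real.sqrt (c - s)
            = (f s) ^ 2 * (1 / Real.sqrt (c - s)) := by ring
          _ = (f s) ^ 2 * (c - s) ^ (-(1/2) : ℝ) := by rw [one_div_sqrt_eq]
          _ ≤ 9 * δ^2 * (c - s) ^ (-(1/2) : ℝ) := by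
              apply mul_le_mul_of_nonneg_right h1 h4
      · rw [intervalIntegral.integral_undef hint]
        positivity
    -- main estimate
    have hmain : f c ≤ 2 * δ + 18 * δ^2 * Real.sqrt c := by
      have := hineq c ⟨hcIcc.1, hcIcc.2⟩
      have hgc := hgδ c ⟨hcIcc.1, hcIcc.2⟩
      linarith
    -- c < T leads to a contradiction; c = T too since f c = 3δ exactly... derive contradiction
    have hcc : Real.sqrt c ≤ Real.sqrt T := Real.sqrt_le_sqrt hcIcc.2
    have hcT : c = T := by
      by_contra hne
      have hlt' : c < T := lt_of_le_of_ne hcIcc.2 hne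
      have hstrict : Real.sqrt c < Real.sqrt T := Real.sqrt_lt_sqrt hcpos.le hlt'
      have : 18 * δ^2 * Real.sqrt c < δ := by
        have h1 : 18 * δ * Real.sqrt c < 18 * δ * Real.sqrt T :=
          mul_lt_mul_of_pos_left hstrict (by positivity)
        nlinarith
      linarith
    exact hbd t ⟨ht.1, hcT ▸ ht.2⟩
end

section
/- Let ξ^{(n)} be a sequence of graphs on n vertices and p_n ∈ (0,1] such that ‖ξ^{(n)}/p_n - 𝟏^{(n)}‖_{∞→1} = o(n²). Then there cannot exist two sequences of distinct connected components C₁^{(n)}, C₂^{(n)} of ξ^{(n)} each of size Θ(n): more precisely, if C₁ and C₂ are disjoint connected components of ξ^{(n)} with |C₁| = n₁ and |C₂| = n₂, then ‖ξ^{(n)}/p_n - 𝟏^{(n)}‖_{∞→1} ≥ n₁ n₂. -/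
/-!
Writing the indicator of a vertex set as `(s + 1) / 2` for a sign vector `s` shows that the
`∞ → 1` norm dominates the cut norm `|∑_{i ∈ X, j ∈ Y} Aᵢⱼ|`. Between two components the
matrix `ξ / p - 𝟏` is identically `-1`, so the cut `C₁ × C₂` alone has weight `n₁ n₂`.
-/

/-- The ℓ_∞→ℓ_1 norm of a matrix: sup over ±1 sign vectors s, t of ∑ᵢⱼ Aᵢⱼ sᵢ tⱼ. -/
noncomputable def linftyToL1Norm {n : ℕ} (A : Matrix (Fin n) (Fin n) ℝ) : ℝ :=
  sSup {x : ℝ | ∃ s t : Fin n → ℝ, (∀ i, s i = 1 ∨ s i = -1) ∧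
    (∀ j, t j = 1 ∨ t j = -1) ∧ x = ∑ i, ∑ j, A i j * s i * t j}

open Matrix

variable {n : ℕ}

def IsSignVector (s : Fin n → ℝ) : Prop := ∀ i, s i = 1 ∨ s i = -1

lemma IsSignVector.one : IsSignVector (1 : Fin n → ℝ) := fun _ => Or.inl rfl

lemma IsSignVector.neg {s : Fin n → ℝ} (hs : IsSignVector s) : IsSignVector (-s) := fun i => by
  rcases hs i with h | h <;> simp [h]

lemma isSignVector_ite_mem (X : Finset (Fin n)) :
    IsSignVector fun i => if i ∈ X then (1 : ℝ) else -1 := fun i => by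
  by_cases h : i ∈ X <;> simp [h]

lemma dotProduct_mulVec_eq_sum_sum (A : Matrix (Fin n) (Fin n) ℝ) (s t : Fin n → ℝ) :
    s ⬝ᵥ (A *ᵥ t) = ∑ i, ∑ j, A i j * s i * t j := by
  simp only [dotProduct, mulVec, Finset.mul_sum]
  exact Finset.sum_congr rfl fun i _ => Finset.sum_congr rfl fun j _ => by ring

lemma dotProduct_mulVec_le_linftyToL1Norm (A : Matrix (Fin n) (Fin n) ℝ) {s t : Fin n → ℝ}
    (hs : IsSignVector s) (ht : IsSignVector t) : s ⬝ᵥ (A *ᵥ t) ≤ linftyToL1Norm A := by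
  refine le_csSup ⟨∑ i, ∑ j, |A i j|, ?_⟩ ⟨s, t, hs, ht, dotProduct_mulVec_eq_sum_sum A s t⟩
  rintro x ⟨s, t, hs, ht, rfl⟩
  refine Finset.sum_le_sum fun i _ => Finset.sum_le_sum fun j _ => ?_
  rcases hs i with h₁ | h₁ <;> rcases ht j with h₂ | h₂ <;> simp [h₁, h₂, le_abs_self, neg_le_abs]

lemma add_dotProduct_mulVec_add_le (A : Matrix (Fin n) (Fin n) ℝ) {s t u v : Fin n → ℝ}
    (hs : IsSignVector s) (ht : IsSignVector t) (hu : IsSignVector u) (hv : IsSignVector v) :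
    (s + u) ⬝ᵥ (A *ᵥ (t + v)) ≤ 4 * linftyToL1Norm A := by
  have hst := dotProduct_mulVec_le_linftyToL1Norm A hs ht
  have hsv := dotProduct_mulVec_le_linftyToL1Norm A hs hv
  have hut := dotProduct_mulVec_le_linftyToL1Norm A hu ht
  have huv := dotProduct_mulVec_le_linftyToL1Norm A hu hv
  simp only [add_dotProduct, mulVec_add, dotProduct_add]
  linarith

lemma ite_mem_add_one_dotProduct_mulVec (A : Matrix (Fin n) (Fin n) ℝ) (X Y : Finset (Fin n)) :
    ((fun i => if i ∈ X then (1 : ℝ) else -1) + 1) ⬝ᵥ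
      (A *ᵥ ((fun j => if j ∈ Y then (1 : ℝ) else -1) + 1)) = 4 * ∑ i ∈ X, ∑ j ∈ Y, A i j := by
  have hind (Z : Finset (Fin n)) :
      (fun i => if i ∈ Z then (1 : ℝ) else -1) + 1 = fun i => if i ∈ Z then 2 else 0 := by
    ext i; by_cases hi : i ∈ Z <;> norm_num [hi]
  rw [hind, hind, dotProduct_mulVec_eq_sum_sum, Finset.mul_sum]
  calc ∑ i, ∑ j, A i j * (if i ∈ X then 2 else 0) * (if j ∈ Y then 2 else 0)
      = ∑ i, if i ∈ X then ∑ j, if j ∈ Y then 4 * A i j else 0 else 0 := by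
        refine Finset.sum_congr rfl fun i _ => ?_
        split_ifs
        · exact Finset.sum_congr rfl fun j _ => by split_ifs <;> ring
        · simp
    _ = ∑ i ∈ X, 4 * ∑ j ∈ Y, A i j := by
        simp only [Finset.sum_ite_mem, Finset.univ_inter, Finset.mul_sum]

lemma abs_sum_sum_le_linftyToL1Norm (A : Matrix (Fin n) (Fin n) ℝ) (X Y : Finset (Fin n)) :
    |∑ i ∈ X, ∑ j ∈ Y, A i j| ≤ linftyToL1Norm A := by
  have hX := isSignVector_ite_mem X
  have hY := isSignVector_ite_mem Y
  have hexpand := ite_mem_add_one_dotProduct_mulVec A X Y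
  have hpos := add_dotProduct_mulVec_add_le A hX hY IsSignVector.one IsSignVector.one
  have hneg := add_dotProduct_mulVec_add_le A hX hY.neg IsSignVector.one IsSignVector.one.neg
  rw [← neg_add, mulVec_neg, dotProduct_neg, hexpand] at hneg
  rw [hexpand] at hpos
  exact abs_le.2 ⟨by linarith, by linarith⟩

theorem no_two_giant_components_general (n : ℕ) (ξ : Matrix (Fin n) (Fin n) ℝ) (p : ℝ)
    (C₁ C₂ : Finset (Fin n))
    (hzero : ∀ i ∈ C₁, ∀ j ∈ C₂, ξ i j = 0) :
    (C₁.card : ℝ) * (C₂.card : ℝ) ≤ linftyToL1Norm (Matrix.of fun i j => ξ i j / p - 1) := by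
  set A : Matrix (Fin n) (Fin n) ℝ := Matrix.of fun i j => ξ i j / p - 1
  have hblock : ∀ i ∈ C₁, ∀ j ∈ C₂, A i j = -1 := fun i hi j hj => by
    simp [A, hzero i hi j hj]
  have hcut : ∑ i ∈ C₁, ∑ j ∈ C₂, A i j = -((C₁.card : ℝ) * C₂.card) := by
    simp [Finset.sum_congr rfl fun i hi => Finset.sum_congr rfl (hblock i hi)]
  have := abs_sum_sum_le_linftyToL1Norm A C₁ C₂
  rwa [hcut, abs_neg, abs_of_nonneg (by positivity)] at this

/-- If C₁ and C₂ are disjoint connected components of the graph ξ (so ξᵢⱼ = 0 for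
i ∈ C₁, j ∈ C₂) of sizes n₁ and n₂, then ‖ξ/p - 𝟏‖_{∞→1} ≥ n₁ n₂. -/
theorem no_two_giant_components (n : ℕ) (ξ : Matrix (Fin n) (Fin n) ℝ) (p : ℝ)
    (hp : 0 < p) (hp1 : p ≤ 1) (hξ : ∀ i j, 0 ≤ ξ i j)
    (C₁ C₂ : Finset (Fin n)) (hdisj : Disjoint C₁ C₂)
    (hzero : ∀ i ∈ C₁, ∀ j ∈ C₂, ξ i j = 0) :
    (C₁.card : ℝ) * (C₂.card : ℝ) ≤ linftyToL1Norm (Matrix.of fun i j => ξ i j / p - 1) :=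
  no_two_giant_components_general n ξ p C₁ C₂ hzero
end

section
/- Suppose ‖ξ^{(n)}/p_n - 𝟏^{(n)}‖_{∞→1} = o(n²). Then the largest connected component C^{(n)} of ξ^{(n)} satisfies |C^{(n)}|/n → 1 as n → ∞. -/
open Filter

lemma eval_le_linftyToL1Norm {n : ℕ} (A : Matrix (Fin n) (Fin n) ℝ) (s t : Fin n → ℝ)
    (hs : ∀ i, s i = 1 ∨ s i = -1) (ht : ∀ j, t j = 1 ∨ t j = -1) :
    ∑ i, ∑ j, A i j * s i * t j ≤ linftyToL1Norm A := by
  apply le_csSup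
  · refine ⟨∑ i, ∑ j, |A i j|, ?_⟩
    rintro x ⟨s', t', hs', ht', rfl⟩
    calc ∑ i, ∑ j, A i j * s' i * t' j ≤ ∑ i, ∑ j, |A i j * s' i * t' j| := by
          refine Finset.sum_le_sum fun i _ => Finset.sum_le_sum fun j _ => le_abs_self _
      _ = ∑ i, ∑ j, |A i j| := by
          refine Finset.sum_congr rfl fun i _ => Finset.sum_congr rfl fun j _ => ?_
          have h1 : |s' i| = 1 := by rcases hs' i with h | h <;> simp [h]
          have h2 : |t' j| = 1 := by rcases ht' j with h | h <;> simp [h]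
          rw [abs_mul, abs_mul, h1, h2, mul_one, mul_one]
  · exact ⟨s, t, hs, ht, rfl⟩

lemma sum_sign_flip {n : ℕ} (a b : Fin n) (hab : a ≠ b) :
    ∑ σ : Fin n → Bool, (if σ a = σ b then (0:ℝ) else 2) = 2 ^ n := by
  set f : (Fin n → Bool) → ℝ := fun σ => if σ a = σ b then (0:ℝ) else 2 with hf
  set e : (Fin n → Bool) → (Fin n → Bool) := fun σ => Function.update σ a (!σ a) with he
  have hinv : Function.Involutive e := by
    intro σ; funext i
    by_cases h : i = a
    · subst h; simp [e]
    · simp [e, Function.update_of_ne h]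
  have hcomp : ∑ σ, f (e σ) = ∑ σ, f σ := Equiv.sum_comp hinv.toPerm f
  have hpair : ∀ σ : Fin n → Bool, f σ + f (e σ) = 2 := by
    intro σ
    have hea : e σ a = !σ a := by simp [e]
    have heb : e σ b = σ b := by simp [e, Function.update_of_ne (Ne.symm hab)]
    cases hσa : σ a <;> cases hσb : σ b <;> simp [f, hea, heb, hσa, hσb]
  have h2 : 2 * ∑ σ, f σ = 2 ^ n * 2 := by
    calc 2 * ∑ σ, f σ = ∑ σ, f σ + ∑ σ, f (e σ) := by rw [hcomp]; ring
      _ = ∑ σ : Fin n → Bool, (2:ℝ) := by rw [← Finset.sum_add_distrib]; exact Finset.sum_congr rfl fun σ _ => hpair σ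
      _ = 2 ^ n * 2 := by simp [Finset.card_univ]
  linarith


lemma key_bound {n : ℕ} (G : SimpleGraph (Fin n)) [DecidableRel G.Adj] (q : ℝ) :
    ((n:ℝ)^2 - n * (⨆ v : Fin n, Nat.card {w : Fin n | G.Reachable v w}) ≤
      2 * linftyToL1Norm (Matrix.of fun i j => (G.adjMatrix ℝ) i j / q - 1)) ∧
    ((⨆ v : Fin n, Nat.card {w : Fin n | G.Reachable v w}) ≤ n) := by
  classical
  set M : Matrix (Fin n) (Fin n) ℝ := Matrix.of fun i j => (G.adjMatrix ℝ) i j / q - 1 with hM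
  set N : ℝ := linftyToL1Norm M with hNdef
  set r : Fin n → Fin n := fun v => Quot.out (G.connectedComponentMk v) with hrdef
  have hr : ∀ i j : Fin n, r i = r j ↔ G.Reachable i j := by
    intro i j
    constructor
    · intro h
      have h1 : G.connectedComponentMk (r i) = G.connectedComponentMk i := Quot.out_eq _
      have h2 : G.connectedComponentMk (r j) = G.connectedComponentMk j := Quot.out_eq _
      have : G.connectedComponentMk i = G.connectedComponentMk j := by rw [← h1, ← h2, h]
      exact SimpleGraph.ConnectedComponent.exact this
    · intro h
      exact congrArg Quot.out (SimpleGraph.ConnectedComponent.sound h)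
  set c : Fin n → ℕ := fun v => Nat.card {w : Fin n | G.Reachable v w} with hcdef
  have hcfil : ∀ v, c v = (Finset.univ.filter fun w => r v = r w).card := by
    intro v
    have hset : {w : Fin n | G.Reachable v w} =
        ↑(Finset.univ.filter fun w => r v = r w) := by
      ext w; simp [hr]
    rw [hcdef]
    simp only [hset]
    rw [Nat.card_coe_set_eq, Set.ncard_coe_finset]
  have hcsum : ∀ v, (c v : ℝ) = ∑ j, if r v = r j then (1:ℝ) else 0 := by
    intro v
    rw [hcfil v, Finset.card_filter]
    push_cast
    simp
  set m : ℕ := ⨆ v : Fin n, c v with hmdef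
  have hcm : ∀ v, c v ≤ m := fun v => le_ciSup (Set.Finite.bddAbove (Set.finite_range c)) v
  have hcn : ∀ v, c v ≤ n := by
    intro v
    rw [hcfil v]
    calc (Finset.univ.filter fun w => r v = r w).card ≤ Finset.univ.card :=
          Finset.card_filter_le _ _
      _ = n := by simp
  have hmn : m ≤ n := by
    rcases Nat.eq_zero_or_pos n with h0 | hpos
    · subst h0
      rw [hmdef]
      simp [ciSup_of_empty]
    · have : Nonempty (Fin n) := ⟨⟨0, hpos⟩⟩
      exact ciSup_le hcn
  refine ⟨?_, hmn⟩
  have hMcross : ∀ i j, r i ≠ r j → M i j = -1 := by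
    intro i j h
    have hnadj : ¬ G.Adj i j := fun hadj => h ((hr i j).2 hadj.reachable)
    rw [hM]
    simp [Matrix.of_apply, SimpleGraph.adjMatrix_apply, hnadj]
  have hA : ∀ σ : Fin n → Bool,
      (∑ i, ∑ j, (if r i = r j then (0:ℝ) else if σ (r i) = σ (r j) then 0 else 2)) ≤ 2 * N := by
    intro σ
    set s : Fin n → ℝ := fun v => if σ (r v) then 1 else -1 with hs
    have hs1 : ∀ i, s i = 1 ∨ s i = -1 := by
      intro i; by_cases h : σ (r i) <;> simp [hs, h]
    have h1 := eval_le_linftyToL1Norm M s s hs1 hs1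
    have h2 := eval_le_linftyToL1Norm M (fun _ => 1) (fun _ => -1)
      (fun _ => Or.inl rfl) (fun _ => Or.inr rfl)
    have hterm : ∀ i j, (if r i = r j then (0:ℝ) else if σ (r i) = σ (r j) then 0 else 2)
        = M i j * s i * s j + M i j * 1 * (-1) := by
      intro i j
      have hss : s i * s i = 1 := by rcases hs1 i with h' | h' <;> rw [h'] <;> norm_num
      by_cases h : r i = r j
      · have hsj : s j = s i := by
          show (if σ (r j) = true then (1:ℝ) else -1) = (if σ (r i) = true then 1 else -1)
          rw [h]
        rw [if_pos h, hsj, mul_assoc, hss, mul_one]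
        ring
      · have hm1 : M i j = -1 := hMcross i j h
        rw [if_neg h, hm1]
        by_cases hb : σ (r i) = σ (r j)
        · have hsj : s j = s i := by
            show (if σ (r j) = true then (1:ℝ) else -1) = (if σ (r i) = true then 1 else -1)
            rw [hb]
          rw [if_pos hb, hsj]
          have he : (-1:ℝ) * s i * s i + -1 * 1 * (-1) = -(s i * s i) + 1 := by ring
          rw [he, hss]
          norm_num
        · have hflip : σ (r j) = ! σ (r i) := by
            cases hσi : σ (r i) <;> cases hσj : σ (r j) <;> simp_all
          have hsj : s j = - s i := by
            show (if σ (r j) = true then (1:ℝ) else -1) = -(if σ (r i) = true then 1 else -1)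
            rw [hflip]
            cases σ (r i) <;> norm_num
          rw [if_neg hb, hsj]
          have he : (-1:ℝ) * s i * (- s i) + -1 * 1 * (-1) = (s i * s i) + 1 := by ring
          rw [he, hss]
          norm_num
    calc ∑ i, ∑ j, (if r i = r j then (0:ℝ) else if σ (r i) = σ (r j) then 0 else 2)
        = ∑ i, ∑ j, (M i j * s i * s j + M i j * 1 * (-1)) := by
          exact Finset.sum_congr rfl fun i _ => Finset.sum_congr rfl fun j _ => hterm i j
      _ = (∑ i, ∑ j, M i j * s i * s j) + (∑ i, ∑ j, M i j * 1 * (-1)) := by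
          rw [← Finset.sum_add_distrib]
          exact Finset.sum_congr rfl fun i _ => Finset.sum_add_distrib
      _ ≤ N + N := add_le_add h1 h2
      _ = 2 * N := by ring
  set Q : ℝ := ∑ i, ∑ j, (if r i = r j then (0:ℝ) else 1) with hQ
  have hQsum : (2:ℝ)^n * Q ≤ (2:ℝ)^n * (2 * N) := by
    have hswap : ∑ σ : Fin n → Bool,
        (∑ i, ∑ j, (if r i = r j then (0:ℝ) else if σ (r i) = σ (r j) then 0 else 2))
        = (2:ℝ)^n * Q := by
      rw [Finset.sum_comm]
      rw [hQ, Finset.mul_sum]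
      refine Finset.sum_congr rfl fun i _ => ?_
      rw [Finset.sum_comm, Finset.mul_sum]
      refine Finset.sum_congr rfl fun j _ => ?_
      by_cases h : r i = r j
      · simp [h]
      · simp only [h, if_false, mul_one]
        exact sum_sign_flip (r i) (r j) h
    calc (2:ℝ)^n * Q = ∑ σ : Fin n → Bool,
          (∑ i, ∑ j, (if r i = r j then (0:ℝ) else if σ (r i) = σ (r j) then 0 else 2)) :=
          hswap.symm
      _ ≤ ∑ σ : Fin n → Bool, 2 * N := Finset.sum_le_sum fun σ _ => hA σ
      _ = (2:ℝ)^n * (2 * N) := by simp [Finset.card_univ]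
  have hQN : Q ≤ 2 * N := by
    have hpow : (0:ℝ) < 2^n := by positivity
    exact le_of_mul_le_mul_left hQsum hpow
  have hQval : Q = (n:ℝ)^2 - ∑ v, (c v : ℝ) := by
    rw [hQ]
    have key : ∀ i, ∑ j, (if r i = r j then (0:ℝ) else 1) = (n:ℝ) - (c i : ℝ) := by
      intro i
      rw [hcsum i]
      have hterm : ∀ j : Fin n, (if r i = r j then (0:ℝ) else 1)
          = (1:ℝ) - (if r i = r j then (1:ℝ) else 0) := by
        intro j; by_cases h : r i = r j <;> simp [h]
      rw [Finset.sum_congr rfl fun j _ => hterm j, Finset.sum_sub_distrib]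
      simp
    rw [Finset.sum_congr rfl fun i _ => key i, Finset.sum_sub_distrib]
    simp [pow_two]
  have hsum_le : ∑ v, (c v : ℝ) ≤ (n:ℝ) * m := by
    calc ∑ v, (c v : ℝ) ≤ ∑ _v : Fin n, (m:ℝ) :=
          Finset.sum_le_sum fun v _ => by exact_mod_cast hcm v
      _ = (n:ℝ) * m := by simp [Finset.card_univ, mul_comm]
  have hfin : (n:ℝ)^2 - (n:ℝ) * m ≤ Q := by rw [hQval]; linarith
  calc (n:ℝ)^2 - (n:ℝ) * m ≤ Q := hfin
    _ ≤ 2 * N := hQN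

lemma cast_iSup_eq {k : ℕ} (hk : 1 ≤ k) (f : Fin k → ℕ) :
    (⨆ i, (f i : ℝ)) = ((⨆ i, f i : ℕ) : ℝ) := by
  have : Nonempty (Fin k) := ⟨⟨0, hk⟩⟩
  obtain ⟨i, hi⟩ := Finite.exists_max f
  have h1 : (⨆ i, f i : ℕ) = f i :=
    le_antisymm (ciSup_le hi) (le_ciSup (Set.Finite.bddAbove (Set.finite_range f)) i)
  have h2 : (⨆ j, (f j : ℝ)) = (f i : ℝ) :=
    le_antisymm (ciSup_le fun j => by exact_mod_cast hi j)
      (le_ciSup (Set.Finite.bddAbove (Set.finite_range fun j => ((f j : ℝ)))) i)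
  rw [h1, h2]

/-- If ‖ξ⁽ⁿ⁾/pₙ - 𝟏‖_{∞→1} = o(n²) then the largest connected component of the graph
sequence has size asymptotically n: |C⁽ⁿ⁾|/n → 1. -/
theorem giant_component (G : (n : ℕ) → SimpleGraph (Fin n))
    [∀ n, DecidableRel (G n).Adj] (p : ℕ → ℝ) (hp : ∀ n, 0 < p n ∧ p n ≤ 1)
    (hcond : Tendsto (fun n : ℕ => (1 / (n : ℝ) ^ 2) *
      linftyToL1Norm (Matrix.of fun i j =>
        ((G n).adjMatrix ℝ) i j / p n - 1)) atTop (nhds 0)) :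
    Tendsto (fun n : ℕ =>
        ((⨆ v : Fin n, Nat.card {w : Fin n | (G n).Reachable v w}) : ℝ) / n)
      atTop (nhds 1) := by
  set N : ℕ → ℝ := fun n => linftyToL1Norm (Matrix.of fun i j =>
      ((G n).adjMatrix ℝ) i j / p n - 1) with hN
  set m : ℕ → ℕ := fun n => ⨆ v : Fin n, Nat.card {w : Fin n | (G n).Reachable v w} with hm
  have hkey : ∀ n : ℕ, (n:ℝ)^2 - n * m n ≤ 2 * N n ∧ m n ≤ n := fun n => key_bound (G n) (p n)
  have hlow : Tendsto (fun n : ℕ => 1 - 2 * ((1/(n:ℝ)^2) * N n)) atTop (nhds 1) := by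
    have h2 : Tendsto (fun n : ℕ => 2 * ((1/(n:ℝ)^2) * N n)) atTop (nhds (2 * 0)) :=
      hcond.const_mul 2
    have h3 := (tendsto_const_nhds : Tendsto (fun _ : ℕ => (1:ℝ)) atTop (nhds 1)).sub h2
    simpa using h3
  apply tendsto_of_tendsto_of_tendsto_of_le_of_le' hlow tendsto_const_nhds
  · -- lower bound eventually
    filter_upwards [eventually_ge_atTop 1] with n hn
    have hn0 : (0:ℝ) < n := by exact_mod_cast hn
    have hkey1 := (hkey n).1
    rw [cast_iSup_eq hn, le_div_iff₀ hn0]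
    have h3 : (1 - 2 * ((1/(n:ℝ)^2) * N n)) * n * n = (n:ℝ)^2 - 2 * N n := by
      field_simp
    have h5 : (1 - 2 * ((1/(n:ℝ)^2) * N n)) * n * n ≤ (m n : ℝ) * n := by
      rw [h3]
      nlinarith [hkey1]
    exact le_of_mul_le_mul_right h5 hn0
  · -- upper bound eventually
    filter_upwards [eventually_ge_atTop 1] with n hn
    have hn0 : (0:ℝ) < n := by exact_mod_cast hn
    rw [cast_iSup_eq hn, div_le_one hn0]
    exact_mod_cast (hkey n).2
end

section
/- Let {ξ_{ij}}_{1≤i≠j≤n} be i.i.d. Bernoulli(p_n) random variables with ξ_{ii} = 0, defined for all n on a common probability space, and suppose n p_n → ∞. Then almost surely, (1/n²) sup_{s,t∈{-1,1}ⁿ} ∑_{i,j=1}^n (ξ_{ij}/p_n - 1) s_i t_j → 0 as n → ∞. -/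
open Filter MeasureTheory

/-!
For fixed sign vectors `s, t`, the number `p · ∑ᵢⱼ (ξᵢⱼ/p - 1) sᵢ tⱼ` is, up to a diagonal
error of at most `n p`, a sum of at most `n²` independent signed centred Bernoulli(`p`) variables.
Since `eᵘ ≤ 1 + u + u²` for `|u| ≤ 1`, each of them has moment generating function at most
`exp (p λ²)` for `0 ≤ λ ≤ 1`. This variance-sensitive bound (Hoeffding would need `n p² → ∞`),
a Chernoff bound at `λ = ε/2` and a union bound over the `4ⁿ` pairs `(s, t)` give
`ℙ(‖ξ/p - 1‖_{∞→1} ≥ ε n²) ≤ e⁻ⁿ` as soon as `n ≥ 4/ε` and `n p ≥ 24/ε²`.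
These probabilities are summable, and Borel–Cantelli concludes.
-/

open Finset

noncomputable def signVectors (n : ℕ) : Finset (Fin n → ℝ) :=
  Fintype.piFinset fun _ => {1, -1}

@[simp]
lemma mem_signVectors {n : ℕ} {s : Fin n → ℝ} :
    s ∈ signVectors n ↔ ∀ i, s i = 1 ∨ s i = -1 := by
  simp [signVectors]

lemma card_signVectors (n : ℕ) : #(signVectors n) = 2 ^ n := by
  simp [signVectors, card_pair (show (1 : ℝ) ≠ -1 by norm_num)]

lemma signVectors_nonempty (n : ℕ) : (signVectors n).Nonempty :=
  ⟨fun _ => 1, by simp⟩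

lemma neg_mem_signVectors {n : ℕ} {s : Fin n → ℝ} (hs : s ∈ signVectors n) :
    -s ∈ signVectors n := by
  simp only [mem_signVectors, Pi.neg_apply, neg_eq_iff_eq_neg, neg_neg] at hs ⊢
  exact fun i => (hs i).symm

lemma abs_eq_one_of_mem_signVectors {n : ℕ} {s : Fin n → ℝ} (hs : s ∈ signVectors n)
    (i : Fin n) : |s i| = 1 := by
  rcases mem_signVectors.1 hs i with h | h <;> simp [h]

theorem Fintype.sum_sum_eq_sum_ne_add_sum_diag {α M : Type*} [Fintype α] [DecidableEq α]
    [AddCommMonoid M] (f : α → α → M) :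
    ∑ i, ∑ j, f i j = ∑ q : {q : α × α // q.1 ≠ q.2}, f q.1.1 q.1.2 + ∑ i, f i i := by
  rw [← Fintype.sum_prod_type', ← Fintype.sum_subtype_add_sum_subtype (fun q : α × α => q.1 ≠ q.2)]
  congr 1
  exact Fintype.sum_equiv ⟨fun q => q.1.1, fun i => ⟨(i, i), not_not.2 rfl⟩,
    fun q => Subtype.ext (Prod.ext rfl (not_not.1 q.2)), fun _ => rfl⟩ _ _
    fun q => by simp only [Equiv.coe_fn_mk, (not_not.1 q.2 : q.1.1 = q.1.2)]

namespace Matrix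

variable {n : ℕ}

def signForm (A : Matrix (Fin n) (Fin n) ℝ) (s t : Fin n → ℝ) : ℝ :=
  ∑ i, ∑ j, A i j * s i * t j

lemma signForm_neg_left (A : Matrix (Fin n) (Fin n) ℝ) (s t : Fin n → ℝ) :
    signForm A (-s) t = -signForm A s t := by
  simp [signForm, ← sum_neg_distrib]

lemma mul_signForm_le {p : ℝ} (hp : 0 < p) {x : Matrix (Fin n) (Fin n) ℝ} (hx : ∀ i, x i i = 0)
    {s t : Fin n → ℝ} (hs : s ∈ signVectors n) (ht : t ∈ signVectors n) :
    p * signForm (of fun i j => x i j / p - 1) s t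
      ≤ ∑ q : {q : Fin n × Fin n // q.1 ≠ q.2}, s q.1.1 * t q.1.2 * (x q.1.1 q.1.2 - p)
        + n * p := by
  have hdiag : ∑ i, s i * t i * (x i i - p) ≤ n * p := by
    calc ∑ i, s i * t i * (x i i - p) ≤ ∑ _i : Fin n, p := by
          refine sum_le_sum fun i _ => ?_
          rw [hx, zero_sub, mul_neg, ← neg_mul]
          refine mul_le_of_le_one_left hp.le (neg_le_abs _ |>.trans ?_)
          rw [abs_mul, abs_eq_one_of_mem_signVectors hs, abs_eq_one_of_mem_signVectors ht, one_mul]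
      _ = n * p := by simp
  calc p * signForm (of fun i j => x i j / p - 1) s t
      = ∑ i, ∑ j, s i * t j * (x i j - p) := by
        simp only [signForm, mul_sum, of_apply]
        refine sum_congr rfl fun i _ => sum_congr rfl fun j _ => ?_
        field_simp
    _ ≤ _ := by
        rw [Fintype.sum_sum_eq_sum_ne_add_sum_diag fun i j => s i * t j * (x i j - p)]
        gcongr

end Matrix

section linftyToL1Norm

open Matrix

variable {n : ℕ}

lemma linftyToL1Norm_eq_sup' (A : Matrix (Fin n) (Fin n) ℝ) :
    linftyToL1Norm A = (signVectors n ×ˢ signVectors n).sup'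
      ((signVectors_nonempty n).product (signVectors_nonempty n))
      (fun st => signForm A st.1 st.2) := by
  rw [sup'_eq_csSup_image, linftyToL1Norm]
  congr 1
  ext x
  simp only [Set.mem_ofPred_eq, coe_product, Set.mem_image, Set.mem_prod, mem_coe,
    mem_signVectors, Prod.exists, signForm]
  aesop

lemma exists_linftyToL1Norm_eq (A : Matrix (Fin n) (Fin n) ℝ) :
    ∃ s ∈ signVectors n, ∃ t ∈ signVectors n, linftyToL1Norm A = signForm A s t := by
  obtain ⟨⟨s, t⟩, hst, h⟩ := exists_mem_eq_sup' ((signVectors_nonempty n).product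
    (signVectors_nonempty n)) (fun st => signForm A st.1 st.2)
  rw [mem_product] at hst
  exact ⟨s, hst.1, t, hst.2, (linftyToL1Norm_eq_sup' A).trans h⟩

lemma signForm_le_linftyToL1Norm (A : Matrix (Fin n) (Fin n) ℝ) {s t : Fin n → ℝ}
    (hs : s ∈ signVectors n) (ht : t ∈ signVectors n) : signForm A s t ≤ linftyToL1Norm A := by
  rw [linftyToL1Norm_eq_sup']
  exact le_sup' (fun st => signForm A st.1 st.2) (b := (s, t)) (mem_product.2 ⟨hs, ht⟩)

lemma linftyToL1Norm_nonneg (A : Matrix (Fin n) (Fin n) ℝ) : 0 ≤ linftyToL1Norm A := by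
  have hs : (fun _ => 1 : Fin n → ℝ) ∈ signVectors n := by simp
  have h₁ := signForm_le_linftyToL1Norm A hs hs
  have h₂ := signForm_le_linftyToL1Norm A (neg_mem_signVectors hs) hs
  rw [signForm_neg_left] at h₂
  linarith

end linftyToL1Norm

section Concentration

open ProbabilityTheory Real

theorem mul_exp_add_mul_exp_le_exp_mul_sq {p u : ℝ} (hp : 0 ≤ p) (hu : |u| ≤ 1) :
    p * exp (u * (1 - p)) + (1 - p) * exp (-(u * p)) ≤ exp (p * u ^ 2) := by
  have hexp : exp u ≤ 1 + u + u ^ 2 := by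
    have := (abs_le.1 (abs_exp_sub_one_sub_id_le hu)).2
    linarith
  calc p * exp (u * (1 - p)) + (1 - p) * exp (-(u * p))
      = exp (-(u * p)) * (1 + p * (exp u - 1)) := by
        rw [show u * (1 - p) = u + -(u * p) by ring, exp_add]; ring
    _ ≤ exp (-(u * p)) * exp (p * (exp u - 1)) := by
        gcongr
        linarith [add_one_le_exp (p * (exp u - 1))]
    _ = exp (p * (exp u - 1 - u)) := by rw [← exp_add]; ring_nf
    _ ≤ exp (p * u ^ 2) := by
        gcongr
        linarith

theorem four_pow_mul_exp_le_exp_neg {n : ℕ} {p ε : ℝ} (hε : 0 < ε) (hn : 4 / ε ≤ n)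
    (hnp : 24 / ε ^ 2 ≤ n * p) :
    4 ^ n * exp (-(ε / 2) * (p * (ε * n ^ 2 - n)) + n ^ 2 * (p * (ε / 2) ^ 2)) ≤ exp (-n) := by
  rw [div_le_iff₀ hε] at hn
  rw [div_le_iff₀ (by positivity)] at hnp
  have h4 : (4 : ℝ) ≤ exp 2 := by
    have := add_one_le_exp 1
    rw [show (2 : ℝ) = 1 + 1 by norm_num, exp_add]
    nlinarith
  have hexponent : -(ε / 2) * (p * (ε * n ^ 2 - n)) + n ^ 2 * (p * (ε / 2) ^ 2) ≤ -3 * n := by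
    have hnp₀ : 0 ≤ n * p * ε := by nlinarith
    nlinarith [mul_nonneg hnp₀ (sub_nonneg.2 hn), mul_nonneg (sub_nonneg.2 hnp) (Nat.cast_nonneg n)]
  calc 4 ^ n * exp (-(ε / 2) * (p * (ε * n ^ 2 - n)) + n ^ 2 * (p * (ε / 2) ^ 2))
      ≤ exp 2 ^ n * exp (-3 * n) := by gcongr
    _ = exp (-n) := by rw [← exp_nat_mul, ← exp_add]; ring_nf

variable {Ω : Type*} [MeasurableSpace Ω] {μ : Measure Ω}

theorem integral_comp_of_eq_zero_or_one [IsProbabilityMeasure μ] {X : Ω → ℝ}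
    (hX : Measurable X) (hval : ∀ ω, X ω = 0 ∨ X ω = 1) (g : ℝ → ℝ) :
    ∫ ω, g (X ω) ∂μ = μ.real {ω | X ω = 1} * g 1 + (1 - μ.real {ω | X ω = 1}) * g 0 := by
  have hA : MeasurableSet {ω | X ω = 1} := hX (measurableSet_singleton 1)
  have hg : (fun ω => g (X ω))
      = fun ω => {ω | X ω = 1}.indicator (fun _ => g 1 - g 0) ω + g 0 := by
    funext ω
    rcases hval ω with h | h <;> simp [Set.indicator, h]
  rw [hg, integral_add ((integrable_const _).indicator hA) (integrable_const _),
    integral_indicator_const _ hA, integral_const, probReal_univ, smul_eq_mul, smul_eq_mul]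
  ring

theorem mgf_sub_le_exp_of_eq_zero_or_one [IsProbabilityMeasure μ] {X : Ω → ℝ}
    (hX : Measurable X) (hval : ∀ ω, X ω = 0 ∨ X ω = 1) {u : ℝ} (hu : |u| ≤ 1) :
    mgf (fun ω => X ω - μ.real {ω | X ω = 1}) μ u ≤ exp (μ.real {ω | X ω = 1} * u ^ 2) := by
  set p := μ.real {ω | X ω = 1} with hp
  calc mgf (fun ω => X ω - p) μ u = p * exp (u * (1 - p)) + (1 - p) * exp (-(u * p)) := by
        rw [mgf, integral_comp_of_eq_zero_or_one hX hval fun x => exp (u * (x - p)), ← hp]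
        ring_nf
    _ ≤ exp (p * u ^ 2) := mul_exp_add_mul_exp_le_exp_mul_sq measureReal_nonneg hu

theorem measureReal_sum_ge_le_of_iIndepFun {ι : Type*} [Fintype ι] {X : ι → Ω → ℝ}
    (hindep : iIndepFun X μ) (hmeas : ∀ i, Measurable (X i)) {l v : ℝ} (hl : 0 ≤ l)
    (hint : ∀ i, Integrable (fun ω => exp (l * X i ω)) μ) (hmgf : ∀ i, mgf (X i) μ l ≤ exp v)
    (b : ℝ) :
    μ.real {ω | b ≤ ∑ i, X i ω} ≤ exp (-l * b + Fintype.card ι * v) := by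
  have := hindep.isProbabilityMeasure
  calc μ.real {ω | b ≤ ∑ i, X i ω} = μ.real {ω | b ≤ (∑ i, X i) ω} := by
        simp only [Finset.sum_apply]
    _ ≤ exp (-l * b) * mgf (∑ i, X i) μ l :=
        measure_ge_le_exp_mul_mgf b hl (hindep.integrable_exp_mul_sum hmeas fun i _ => hint i)
    _ ≤ exp (-l * b) * ∏ _i : ι, exp v := by
        rw [hindep.mgf_sum hmeas]
        gcongr with i
        · exact fun i _ => mgf_nonneg
        · exact hmgf i
    _ = exp (-l * b + Fintype.card ι * v) := by
        rw [prod_const, card_univ, ← exp_nat_mul, ← exp_add]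

theorem measureReal_sum_mul_sub_ge_le {ι : Type*} [Fintype ι] [IsProbabilityMeasure μ]
    {X : ι → Ω → ℝ} (hindep : iIndepFun X μ) (hmeas : ∀ i, Measurable (X i))
    (hval : ∀ i ω, X i ω = 0 ∨ X i ω = 1) {p : ℝ} (hp : ∀ i, μ.real {ω | X i ω = 1} = p)
    {c : ι → ℝ} (hc : ∀ i, |c i| = 1) {l : ℝ} (hl₀ : 0 ≤ l) (hl₁ : l ≤ 1) (b : ℝ) :
    μ.real {ω | b ≤ ∑ i, c i * (X i ω - p)} ≤ exp (-l * b + Fintype.card ι * (p * l ^ 2)) := by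
  have hbdd : ∀ i ω, |c i * (X i ω - p)| ≤ 1 := fun i ω => by
    have : 0 ≤ p ∧ p ≤ 1 := hp i ▸ ⟨measureReal_nonneg, measureReal_le_one⟩
    rw [abs_mul, hc, one_mul, abs_le]
    rcases hval i ω with h | h <;> rw [h] <;> constructor <;> linarith
  refine measureReal_sum_ge_le_of_iIndepFun
    (hindep.comp (fun i x => c i * (x - p)) fun i => by fun_prop) (fun i => by fun_prop) hl₀
    (fun i => ?_) (fun i => ?_) b
  · refine .of_bound (by fun_prop) (exp l) (ae_of_all _ fun ω => ?_)
    rw [norm_eq_abs, abs_exp, exp_le_exp, Function.comp_apply]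
    nlinarith [abs_le.1 (hbdd i ω)]
  · have hcl : |c i * l| ≤ 1 := by rwa [abs_mul, hc, one_mul, abs_of_nonneg hl₀]
    calc mgf (fun ω => c i * (X i ω - p)) μ l = mgf (fun ω => X i ω - p) μ (c i * l) :=
          mgf_const_mul _
      _ ≤ exp (p * (c i * l) ^ 2) :=
          hp i ▸ mgf_sub_le_exp_of_eq_zero_or_one (hmeas i) (hval i) hcl
      _ = exp (p * l ^ 2) := by rw [mul_pow, ← sq_abs (c i), hc, one_pow, one_mul]

open Matrix in
theorem measureReal_linftyToL1Norm_ge_le [IsProbabilityMeasure μ] {n : ℕ} {p : ℝ} (hp : 0 < p)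
    {ξ : Fin n → Fin n → Ω → ℝ} (hmeas : ∀ i j, Measurable (ξ i j))
    (hval : ∀ i j, i ≠ j → ∀ ω, ξ i j ω = 0 ∨ ξ i j ω = 1) (hdiag : ∀ i ω, ξ i i ω = 0)
    (hber : ∀ i j, i ≠ j → μ.real {ω | ξ i j ω = 1} = p)
    (hindep : iIndepFun (fun (q : {q : Fin n × Fin n // q.1 ≠ q.2}) ω => ξ q.1.1 q.1.2 ω) μ)
    {l : ℝ} (hl₀ : 0 ≤ l) (hl₁ : l ≤ 1) (thr : ℝ) :
    μ.real {ω | thr ≤ linftyToL1Norm (of fun i j => ξ i j ω / p - 1)}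
      ≤ 4 ^ n * exp (-l * (p * (thr - n)) + n ^ 2 * (p * l ^ 2)) := by
  set F : (Fin n → ℝ) × (Fin n → ℝ) → Set Ω := fun st =>
    {ω | p * (thr - n) ≤ ∑ q : {q : Fin n × Fin n // q.1 ≠ q.2},
      st.1 q.1.1 * st.2 q.1.2 * (ξ q.1.1 q.1.2 ω - p)}
  have hsub : {ω | thr ≤ linftyToL1Norm (of fun i j => ξ i j ω / p - 1)}
      ⊆ ⋃ st ∈ signVectors n ×ˢ signVectors n, F st := by
    intro ω hω
    obtain ⟨s, hs, t, ht, heq⟩ := exists_linftyToL1Norm_eq (of fun i j => ξ i j ω / p - 1)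
    refine Set.mem_biUnion (x := (s, t)) (mem_product.2 ⟨hs, ht⟩) ?_
    have := mul_signForm_le hp (x := of fun i j => ξ i j ω) (fun i => hdiag i ω) hs ht
    rw [Set.mem_ofPred_eq, heq] at hω
    have := mul_le_mul_of_nonneg_left hω hp.le
    simp only [F, Set.mem_ofPred_eq, of_apply] at *
    linarith
  have hcard : (Fintype.card {q : Fin n × Fin n // q.1 ≠ q.2} : ℝ) ≤ n ^ 2 := by
    have := Fintype.card_subtype_le fun q : Fin n × Fin n => q.1 ≠ q.2
    rw [Fintype.card_prod, Fintype.card_fin, ← sq] at this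
    exact_mod_cast this
  calc μ.real {ω | thr ≤ linftyToL1Norm (of fun i j => ξ i j ω / p - 1)}
      ≤ ∑ st ∈ signVectors n ×ˢ signVectors n, μ.real (F st) :=
        (measureReal_mono hsub (measure_ne_top _ _)).trans (measureReal_biUnion_finset_le _ _)
    _ ≤ ∑ _st ∈ signVectors n ×ˢ signVectors n,
          exp (-l * (p * (thr - n)) + n ^ 2 * (p * l ^ 2)) := by
        refine sum_le_sum fun st hst => ?_
        obtain ⟨hs, ht⟩ := mem_product.1 hst
        refine (measureReal_sum_mul_sub_ge_le hindep (fun q => hmeas _ _)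
          (fun q => hval _ _ q.2) (fun q => hber _ _ q.2) (fun q => ?_) hl₀ hl₁ _).trans ?_
        · rw [abs_mul, abs_eq_one_of_mem_signVectors hs, abs_eq_one_of_mem_signVectors ht,
            one_mul]
        · gcongr
    _ = 4 ^ n * exp (-l * (p * (thr - n)) + n ^ 2 * (p * l ^ 2)) := by
        rw [sum_const, card_product, card_signVectors, nsmul_eq_mul, ← mul_pow]
        norm_num

theorem ae_tendsto_zero_of_summable_measureReal_ge [IsFiniteMeasure μ] {Y : ℕ → Ω → ℝ}
    (hY : ∀ n ω, 0 ≤ Y n ω)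
    (hsum : ∀ ε, 0 < ε → ε ≤ 1 → Summable fun n => μ.real {ω | ε ≤ Y n ω}) :
    ∀ᵐ ω ∂μ, Tendsto (fun n => Y n ω) atTop (nhds 0) := by
  have hsmall : ∀ k : ℕ, ∀ᵐ ω ∂μ, ∀ᶠ n in atTop, Y n ω < 1 / (k + 1) := fun k => by
    have hk : (1 : ℝ) / (k + 1) ≤ 1 := by
      rw [div_le_one (by positivity)]
      linarith [(Nat.cast_nonneg k : (0 : ℝ) ≤ k)]
    have htsum : ∑' n, μ {ω | 1 / (k + 1) ≤ Y n ω} ≠ ⊤ := by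
      rw [tsum_congr fun n => (ofReal_measureReal (μ := μ)).symm,
        ← ENNReal.ofReal_tsum_of_nonneg (fun _ => measureReal_nonneg) (hsum _ (by positivity) hk)]
      exact ENNReal.ofReal_ne_top
    filter_upwards [ae_eventually_notMem htsum] with ω hω
    exact hω.mono fun n hn => not_le.1 hn
  filter_upwards [ae_all_iff.2 hsmall] with ω hω
  refine tendsto_order.2 ⟨fun a ha => .of_forall fun n => ha.trans_le (hY n ω), fun a ha => ?_⟩
  obtain ⟨k, hk⟩ := exists_nat_one_div_lt ha
  exact (hω k).mono fun n hn => hn.trans hk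

end Concentration

/-- Almost-sure version of the Erdős–Rényi concentration: if n pₙ → ∞ then almost surely
(1/n²)‖ξ⁽ⁿ⁾/pₙ - 𝟏‖_{∞→1} → 0 as n → ∞. -/
theorem erdos_renyi_as_convergence {Ω : Type*} [MeasurableSpace Ω]
    (ℙ : Measure Ω) [IsProbabilityMeasure ℙ]
    (p : ℕ → ℝ) (hp : ∀ n, 0 < p n ∧ p n ≤ 1)
    (hnp : Tendsto (fun n : ℕ => (n : ℝ) * p n) atTop atTop)
    (ξ : (n : ℕ) → Fin n → Fin n → Ω → ℝ)
    (hmeas : ∀ n i j, Measurable (ξ n i j))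
    (hval : ∀ n (i j : Fin n), i ≠ j → ∀ ω, ξ n i j ω = 0 ∨ ξ n i j ω = 1)
    (hdiag : ∀ n (i : Fin n) (ω : Ω), ξ n i i ω = 0)
    (hber : ∀ n (i j : Fin n), i ≠ j →
      ℙ {ω | ξ n i j ω = 1} = ENNReal.ofReal (p n))
    (hindep : ∀ n, ProbabilityTheory.iIndepFun
      (m := fun _ : {q : Fin n × Fin n // q.1 ≠ q.2} => (inferInstance : MeasurableSpace ℝ))
      (fun q ω => ξ n q.1.1 q.1.2 ω) ℙ) :
    ∀ᵐ ω ∂ℙ, Tendsto (fun n : ℕ => (1 / (n : ℝ) ^ 2) *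
        linftyToL1Norm (Matrix.of fun i j => ξ n i j ω / p n - 1))
      atTop (nhds 0) := by
  refine ae_tendsto_zero_of_summable_measureReal_ge
    (fun n ω => mul_nonneg (by positivity) (linftyToL1Norm_nonneg _)) fun ε hε hε₁ => ?_
  refine .of_norm_bounded_eventually_nat Real.summable_exp_neg_nat ?_
  filter_upwards [eventually_gt_atTop 0, tendsto_natCast_atTop_atTop.eventually_ge_atTop (4 / ε),
    hnp.eventually_ge_atTop (24 / ε ^ 2)] with n hn₀ hn hnpn
  have hber' : ∀ i j, i ≠ j → ℙ.real {ω | ξ n i j ω = 1} = p n := fun i j hij => by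
    rw [measureReal_def, hber n i j hij, ENNReal.toReal_ofReal (hp n).1.le]
  have hevent :
      {ω | ε ≤ 1 / (n : ℝ) ^ 2 * linftyToL1Norm (Matrix.of fun i j => ξ n i j ω / p n - 1)}
        = {ω | ε * n ^ 2 ≤ linftyToL1Norm (Matrix.of fun i j => ξ n i j ω / p n - 1)} := by
    ext ω
    rw [Set.mem_ofPred_eq, Set.mem_ofPred_eq, one_div_mul_eq_div, le_div_iff₀ (by positivity)]
  rw [Real.norm_of_nonneg measureReal_nonneg, hevent]
  exact (measureReal_linftyToL1Norm_ge_le (hp n).1 (hmeas n) (hval n) (hdiag n) hber' (hindep n)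
    (by positivity) (by linarith) _).trans (four_pow_mul_exp_le_exp_neg hε hn hnpn)
end

section
/- (Expander mixing in ℓ_∞→ℓ_1 norm) Let G be the adjacency matrix of a d-regular graph on n vertices and let λ(d) be the second largest eigenvalue of G in absolute value. Then (1/n²) ‖(n/d) G - 𝟏^{(n)}‖_{∞→1} ≤ 4 λ(d)/d, where 𝟏^{(n)} is the all-ones matrix and ‖M‖_{∞→1} = sup_{s,t∈{-1,1}ⁿ} ∑_{ij} M_{ij} s_i t_j. -/
/-
The matrix `M = (n/d) G - J` annihilates the all-ones vector (by `d`-regularity), and on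
vectors of mean zero it acts as `(n/d) G`. Hence for sign vectors `s, t`, replacing `t` by its
centred version `v` (still of length at most `√n`) gives `sᵀ M t = (n/d) sᵀ G v`, which
Cauchy–Schwarz and the spectral bound on mean-zero vectors bound by `(n/d) · √n · λ√n = λ n²/d`,
so the normalised norm is at most `λ/d`.
-/

open Finset Matrix

variable {ι : Type*} [Fintype ι]

noncomputable def centered (t : ι → ℝ) : ι → ℝ := fun i => t i - (∑ j, t j) / Fintype.card ι

lemma card_mul_sum_div_card (t : ι → ℝ) :
    (Fintype.card ι : ℝ) * ((∑ j, t j) / Fintype.card ι) = ∑ j, t j := by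
  cases isEmpty_or_nonempty ι
  · simp
  · exact mul_div_cancel₀ _ (by positivity)

lemma sum_centered (t : ι → ℝ) : ∑ i, centered t i = 0 := by
  simp only [centered, sum_sub_distrib, sum_const, card_univ, nsmul_eq_mul,
    card_mul_sum_div_card, sub_self]

lemma sum_sq_centered_le (t : ι → ℝ) : ∑ i, centered t i ^ 2 ≤ ∑ i, t i ^ 2 := by
  set c := (∑ j, t j) / Fintype.card ι
  have hexpand : ∑ i, centered t i ^ 2 = ∑ i, t i ^ 2 - Fintype.card ι * c ^ 2 := by
    simp only [centered, sub_sq, sum_add_distrib, sum_sub_distrib, sum_const, card_univ,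
      nsmul_eq_mul, ← sum_mul, ← mul_sum]
    linear_combination (2 * c) * card_mul_sum_div_card t
  rw [hexpand]
  exact sub_le_self _ (by positivity)

lemma sum_sq_eq_card_of_sign {s : ι → ℝ} (hs : ∀ i, s i = 1 ∨ s i = -1) :
    ∑ i, s i ^ 2 = (Fintype.card ι : ℝ) := by
  have hsq : ∀ i, s i ^ 2 = 1 := fun i => by rcases hs i with h | h <;> simp [h]
  simp [hsq]

lemma sum_sum_mul_mul_eq_dotProduct_mulVec (A : Matrix ι ι ℝ) (s t : ι → ℝ) :
    ∑ i, ∑ j, A i j * s i * t j = s ⬝ᵥ (A *ᵥ t) := by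
  simp only [dotProduct, mulVec, mul_sum]
  exact sum_congr rfl fun i _ => sum_congr rfl fun j _ => by ring

lemma mulVec_eq_smul_mulVec_centered {d : ℝ} (hd : d ≠ 0) {G : Matrix ι ι ℝ}
    (hreg : ∀ i, ∑ j, G i j = d) (t : ι → ℝ) :
    (of fun i j => ((Fintype.card ι : ℝ) / d) * G i j - 1) *ᵥ t
      = ((Fintype.card ι : ℝ) / d) • (G *ᵥ centered t) := by
  ext i
  have hGc : (G *ᵥ centered t) i = (G *ᵥ t) i - d * ((∑ j, t j) / Fintype.card ι) := by
    simp only [mulVec, dotProduct, centered, mul_sub, sum_sub_distrib, ← sum_mul, hreg]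
  have hmean : (Fintype.card ι : ℝ) / d * (d * ((∑ j, t j) / Fintype.card ι)) = ∑ j, t j := by
    rw [← mul_assoc, div_mul_cancel₀ _ hd, card_mul_sum_div_card]
  simp only [Pi.smul_apply, smul_eq_mul, hGc, mul_sub, hmean]
  simp only [mulVec, dotProduct, of_apply, sub_mul, sum_sub_distrib, one_mul, mul_sum, mul_assoc]

lemma sign_bilinear_le {d : ℝ} (hd : 0 < d) {G : Matrix ι ι ℝ} (hreg : ∀ i, ∑ j, G i j = d)
    {lam : ℝ} (hlam : 0 ≤ lam)
    (hspec : ∀ v : ι → ℝ, ∑ i, v i = 0 →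
      √(∑ i, (G *ᵥ v) i ^ 2) ≤ lam * √(∑ i, v i ^ 2))
    {s t : ι → ℝ} (hs : ∀ i, s i = 1 ∨ s i = -1) (ht : ∀ j, t j = 1 ∨ t j = -1) :
    ∑ i, ∑ j, (of fun i j => ((Fintype.card ι : ℝ) / d) * G i j - 1) i j * s i * t j
      ≤ lam * Fintype.card ι ^ 2 / d := by
  set n : ℝ := (Fintype.card ι : ℝ)
  have hGv : √(∑ i, (G *ᵥ centered t) i ^ 2) ≤ lam * √n := by
    calc √(∑ i, (G *ᵥ centered t) i ^ 2) ≤ lam * √(∑ i, centered t i ^ 2) :=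
          hspec _ (sum_centered t)
      _ ≤ lam * √n := by
          gcongr
          exact (sum_sq_centered_le t).trans (sum_sq_eq_card_of_sign ht).le
  calc ∑ i, ∑ j, (of fun i j => (n / d) * G i j - 1) i j * s i * t j
      = n / d * ∑ i, s i * (G *ᵥ centered t) i := by
        rw [sum_sum_mul_mul_eq_dotProduct_mulVec, mulVec_eq_smul_mulVec_centered hd.ne' hreg,
          dotProduct_smul, smul_eq_mul, dotProduct]
    _ ≤ n / d * (√n * (lam * √n)) := by
        gcongr
        calc ∑ i, s i * (G *ᵥ centered t) i
            ≤ √(∑ i, s i ^ 2) * √(∑ i, (G *ᵥ centered t) i ^ 2) :=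
              Real.sum_mul_le_sqrt_mul_sqrt _ _ _
          _ ≤ √n * (lam * √n) := by rw [sum_sq_eq_card_of_sign hs]; gcongr
    _ = lam * n ^ 2 / d := by
        linear_combination (n / d * lam) * Real.mul_self_sqrt (Nat.cast_nonneg _ : 0 ≤ n)

lemma linftyToL1Norm_le {n : ℕ} {d : ℝ} (hd : 0 < d) {G : Matrix (Fin n) (Fin n) ℝ}
    (hreg : ∀ i, ∑ j, G i j = d) {lam : ℝ} (hlam : 0 ≤ lam)
    (hspec : ∀ v : Fin n → ℝ, ∑ i, v i = 0 →
      √(∑ i, (G *ᵥ v) i ^ 2) ≤ lam * √(∑ i, v i ^ 2)) :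
    linftyToL1Norm (of fun i j => ((n : ℝ) / d) * G i j - 1) ≤ lam * n ^ 2 / d := by
  refine Real.sSup_le ?_ (by positivity)
  rintro x ⟨s, t, hs, ht, rfl⟩
  simpa only [Fintype.card_fin] using sign_bilinear_le hd hreg hlam hspec hs ht

theorem expander_mixing_general (n : ℕ) (d : ℝ) (hd : 0 < d)
    (G : Matrix (Fin n) (Fin n) ℝ)
    (hreg : ∀ i, ∑ j, G i j = d)
    (lam : ℝ) (hlam : 0 ≤ lam)
    (hspec : ∀ v : Fin n → ℝ, ∑ i, v i = 0 →
      Real.sqrt (∑ i, (G.mulVec v i) ^ 2) ≤ lam * Real.sqrt (∑ i, (v i) ^ 2)) :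
    (1 / (n : ℝ) ^ 2) * linftyToL1Norm (Matrix.of fun i j => ((n : ℝ) / d) * G i j - 1)
      ≤ 4 * lam / d := by
  calc (1 / (n : ℝ) ^ 2) * linftyToL1Norm (Matrix.of fun i j => ((n : ℝ) / d) * G i j - 1)
      ≤ 1 / (n : ℝ) ^ 2 * (lam * n ^ 2 / d) := by
        gcongr
        exact linftyToL1Norm_le hd hreg hlam hspec
    _ = lam / d * ((n : ℝ) ^ 2 / n ^ 2) := by ring
    _ ≤ lam / d := mul_le_of_le_one_right (by positivity) (div_self_le_one _)
    _ ≤ 4 * lam / d := by gcongr; linarith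

/-- Expander mixing lemma in ℓ_∞→ℓ_1 norm: if G is a d-regular graph on n vertices whose
second largest eigenvalue in absolute value is λ (expressed as the spectral bound on the
orthogonal complement of the all-ones vector), then (1/n²)‖(n/d)G - 𝟏‖_{∞→1} ≤ 4λ/d. -/
theorem expander_mixing (n : ℕ) (hn : 0 < n) (d : ℝ) (hd : 0 < d)
    (G : Matrix (Fin n) (Fin n) ℝ) (hsym : G.IsSymm)
    (h01 : ∀ i j, G i j = 0 ∨ G i j = 1)
    (hreg : ∀ i, ∑ j, G i j = d)
    (lam : ℝ) (hlam : 0 ≤ lam)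
    (hspec : ∀ v : Fin n → ℝ, ∑ i, v i = 0 →
      Real.sqrt (∑ i, (G.mulVec v i) ^ 2) ≤ lam * Real.sqrt (∑ i, (v i) ^ 2)) :
    (1 / (n : ℝ) ^ 2) * linftyToL1Norm (Matrix.of fun i j => ((n : ℝ) / d) * G i j - 1)
      ≤ 4 * lam / d :=
  expander_mixing_general n d hd G hreg lam hlam hspec
end

section
/- Let H be a real Hilbert space and a = (a_{ij}) an n×n real matrix such that ∑_{ij} a_{ij} s_i t_j ≤ K for all s_i, t_j ∈ {-1,1}. If S_1,…,S_n, T_1,…,T_n ∈ H satisfy ‖S_i‖ ≤ R and ‖T_j‖ ≤ R' for all i,j, then ∑_{i,j=1}^n a_{ij} ⟨S_i, T_j⟩_H ≤ K_G · K · R · R', where K_G is the Grothendieck constant. -/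
/-!
A vector `x ∈ ℝ^ι` is represented on the sign cube `{±1}^ι` by the Rademacher sum
`X(ε) = ∑ₜ xₜ εₜ`; then `⟨X, Y⟩ = 2^|ι| ⟨x, y⟩`, and Khintchine's inequality gives
`∑_ε X(ε)⁴ ≤ 3 · 2^|ι| ‖x‖⁴`. Truncating `X` at `±4` splits `⟨x, y⟩` into a truncated part
`⟨φX, φY⟩`, which the sign hypothesis bounds by `16K` pointwise in `ε`, and two parts each
containing a tail `X - φX` of norm at most `√3/4 < 9/20` (in normalised units). So if `M`
bounds `∑ aᵢⱼ ⟨xᵢ, yⱼ⟩` over unit vectors, then so does `16K + (9/10)M`. The least such bound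
`G` (finite, as `∑ |aᵢⱼ|` is one) thus satisfies `G ≤ 16K + (9/10)G`, i.e. `G ≤ 160K`.
Arbitrary Hilbert-space vectors reduce to this case through their finite-dimensional span.
-/

open Finset RealInnerProductSpace

namespace Grothendieck

noncomputable def signOf (b : Bool) : ℝ := if b then 1 else -1

@[simp] lemma signOf_not (b : Bool) : signOf (!b) = -signOf b := by cases b <;> simp [signOf]

@[simp] lemma signOf_mul_self (b : Bool) : signOf b * signOf b = 1 := by cases b <;> simp [signOf]

section Rademacher

variable {ι : Type*}

noncomputable def rademacherSum (s : Finset ι) (f : ι → ℝ) (ε : ι → Bool) : ℝ :=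
  ∑ t ∈ s, f t * signOf (ε t)

variable [DecidableEq ι]

lemma rademacherSum_insert {s : Finset ι} {t : ι} (ht : t ∉ s) (f : ι → ℝ)
    (ε : ι → Bool) :
    rademacherSum (insert t s) f ε = f t * signOf (ε t) + rademacherSum s f ε :=
  sum_insert ht

variable [Fintype ι]

lemma sum_eq_zero_of_update_not (t : ι) (F : (ι → Bool) → ℝ)
    (hF : ∀ ε, F (Function.update ε t (!ε t)) = -F ε) :
    ∑ ε, F ε = 0 := by
  have hinv : Function.Involutive fun ε : ι → Bool => Function.update ε t (!ε t) := by
    intro ε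
    simp
  have h := Equiv.sum_comp (hinv.toPerm _) F
  simp only [Function.Involutive.coe_toPerm, hF, sum_neg_distrib] at h
  linarith

lemma sum_signOf_mul_signOf (t t' : ι) :
    ∑ ε : ι → Bool, signOf (ε t) * signOf (ε t') =
      if t = t' then (2 : ℝ) ^ Fintype.card ι else 0 := by
  split_ifs with h
  · simp [h]
  · apply sum_eq_zero_of_update_not t
    intro ε
    simp [Function.update_of_ne (Ne.symm h)]

lemma sum_rademacherSum_mul (s : Finset ι) (f g : ι → ℝ) :
    ∑ ε, rademacherSum s f ε * rademacherSum s g ε =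
      2 ^ Fintype.card ι * ∑ t ∈ s, f t * g t := by
  have hexpand : ∀ ε, rademacherSum s f ε * rademacherSum s g ε =
      ∑ t ∈ s, ∑ t' ∈ s, f t * g t' * (signOf (ε t) * signOf (ε t')) := fun ε => by
    rw [rademacherSum, rademacherSum, sum_mul_sum]
    exact sum_congr rfl fun t _ => sum_congr rfl fun t' _ => by ring
  simp_rw [hexpand]
  rw [sum_comm]
  simp_rw [sum_comm (s := univ), ← mul_sum, sum_signOf_mul_signOf, mul_ite, mul_zero,
    sum_ite_eq, mul_sum]
  exact sum_congr rfl fun t ht => by rw [if_pos ht, mul_comm]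

lemma sum_rademacherSum_pow_mul_signOf {s : Finset ι} {t : ι} (ht : t ∉ s) (f : ι → ℝ)
    (m : ℕ) :
    ∑ ε, rademacherSum s f ε ^ m * signOf (ε t) = 0 := by
  apply sum_eq_zero_of_update_not t
  intro ε
  have : rademacherSum s f (Function.update ε t (!ε t)) = rademacherSum s f ε :=
    sum_congr rfl fun t' ht' => by rw [Function.update_of_ne (ne_of_mem_of_not_mem ht' ht)]
  simp [this]

lemma sum_rademacherSum_pow_four_le (s : Finset ι) (f : ι → ℝ) :
    ∑ ε, rademacherSum s f ε ^ 4 ≤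
      3 * 2 ^ Fintype.card ι * (∑ t ∈ s, f t ^ 2) ^ 2 := by
  induction s using Finset.induction with
  | empty => simp [rademacherSum]
  | insert t s ht ih =>
    set N : ℝ := (2 : ℝ) ^ Fintype.card ι
    set R := rademacherSum s f
    have hexpand : ∀ ε, rademacherSum (insert t s) f ε ^ 4 =
        R ε ^ 4 + 4 * f t * (R ε ^ 3 * signOf (ε t)) + 6 * f t ^ 2 * R ε ^ 2
          + 4 * f t ^ 3 * (R ε ^ 1 * signOf (ε t)) + f t ^ 4 := by
      intro ε
      have hsq : signOf (ε t) ^ 2 = 1 := by rw [sq, signOf_mul_self]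
      rw [rademacherSum_insert ht]
      linear_combination (6 * f t ^ 2 * R ε ^ 2 + 4 * f t ^ 3 * R ε * signOf (ε t)
        + f t ^ 4 * (signOf (ε t) ^ 2 + 1)) * hsq
    have hsecond : ∑ ε, R ε ^ 2 = N * ∑ t ∈ s, f t ^ 2 := by
      simpa [sq] using sum_rademacherSum_mul s f f
    have hodd (m : ℕ) : ∑ ε, R ε ^ m * signOf (ε t) = 0 :=
      sum_rademacherSum_pow_mul_signOf ht f m
    have hcard : ((univ : Finset (ι → Bool)).card : ℝ) = N := by simp [N]
    simp only [hexpand, sum_add_distrib, ← mul_sum, hodd, hsecond, sum_const, nsmul_eq_mul, hcard,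
      sum_insert ht]
    nlinarith [ih, mul_nonneg (by positivity : (0:ℝ) ≤ N) (pow_nonneg (sq_nonneg (f t)) 2)]

noncomputable def rademacher (x : EuclideanSpace ℝ ι) : EuclideanSpace ℝ (ι → Bool) :=
  WithLp.toLp 2 (rademacherSum univ x.ofLp)

lemma inner_rademacher (x y : EuclideanSpace ℝ ι) :
    ⟪rademacher x, rademacher y⟫ = 2 ^ Fintype.card ι * ⟪x, y⟫ := by
  simp only [rademacher, PiLp.inner_apply, RCLike.inner_apply, conj_trivial]
  rw [sum_rademacherSum_mul]

lemma norm_rademacher (x : EuclideanSpace ℝ ι) :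
    ‖rademacher x‖ = √(2 ^ Fintype.card ι) * ‖x‖ := by
  rw [← Real.sqrt_sq (norm_nonneg _), ← real_inner_self_eq_norm_sq, inner_rademacher,
    real_inner_self_eq_norm_sq, Real.sqrt_mul (by positivity), Real.sqrt_sq (norm_nonneg _)]

lemma sum_rademacher_pow_four_le (x : EuclideanSpace ℝ ι) :
    ∑ ε, rademacher x ε ^ 4 ≤ 3 * 2 ^ Fintype.card ι * ‖x‖ ^ 4 := by
  have hnorm : ‖x‖ ^ 2 = ∑ t, x t ^ 2 := by simp [EuclideanSpace.norm_sq_eq]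
  rw [show ‖x‖ ^ 4 = (‖x‖ ^ 2) ^ 2 by ring, hnorm]
  exact sum_rademacherSum_pow_four_le univ x.ofLp

end Rademacher

section Truncation

noncomputable def truncate (c : ℝ) : ℝ := max (-4) (min 4 c)

lemma abs_truncate_le (c : ℝ) : |truncate c| ≤ 4 := by
  rw [truncate, abs_le]
  constructor
  · exact le_max_left _ _
  · exact max_le (by norm_num) (min_le_left _ _)

lemma truncate_cases (c : ℝ) :
    truncate c = 4 ∧ 4 ≤ c ∨ truncate c = c ∨ truncate c = -4 ∧ c ≤ -4 := by
  rcases le_total 4 c with h | h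
  · exact .inl ⟨by simp [truncate, h], h⟩
  rcases le_total c (-4) with h' | h'
  · exact .inr <| .inr ⟨by simp [truncate, h, h'], h'⟩
  · exact .inr <| .inl <| by simp [truncate, h, h']

lemma truncate_sq_le (c : ℝ) : truncate c ^ 2 ≤ c ^ 2 := by
  rcases truncate_cases c with ⟨h, hc⟩ | h | ⟨h, hc⟩ <;> rw [h] <;> nlinarith

-- `|c - 4| ≤ c ^ 2 / 16` for `c ≥ 4` is `(c - 8) ^ 2 ≥ 0`.
lemma sub_truncate_sq_le (c : ℝ) : (c - truncate c) ^ 2 ≤ c ^ 4 / 16 := by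
  rcases truncate_cases c with ⟨h, hc⟩ | h | ⟨h, hc⟩ <;> rw [h]
  · nlinarith [sq_nonneg (c - 8)]
  · rw [sub_self]; norm_num; positivity
  · nlinarith [sq_nonneg (c + 8)]

variable {κ : Type*} [Fintype κ]

noncomputable def truncateCoords (u : EuclideanSpace ℝ κ) : EuclideanSpace ℝ κ :=
  WithLp.toLp 2 fun k => truncate (u k)

lemma norm_truncateCoords_le (u : EuclideanSpace ℝ κ) : ‖truncateCoords u‖ ≤ ‖u‖ := by
  rw [← sq_le_sq₀ (norm_nonneg _) (norm_nonneg _), EuclideanSpace.norm_sq_eq,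
    EuclideanSpace.norm_sq_eq]
  simpa [truncateCoords] using sum_le_sum fun k _ => truncate_sq_le (u k)

lemma norm_sub_truncateCoords_sq_le (u : EuclideanSpace ℝ κ) :
    ‖u - truncateCoords u‖ ^ 2 ≤ (∑ k, u k ^ 4) / 16 := by
  rw [EuclideanSpace.norm_sq_eq, sum_div]
  simpa [truncateCoords] using sum_le_sum fun k _ => sub_truncate_sq_le (u k)

end Truncation

lemma norm_rademacher_sub_truncateCoords_le {ι : Type*} [Fintype ι] [DecidableEq ι]
    {x : EuclideanSpace ℝ ι} (hx : ‖x‖ ≤ 1) :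
    ‖rademacher x - truncateCoords (rademacher x)‖ ≤ 9 / 20 * √(2 ^ Fintype.card ι) := by
  have hx4 : ‖x‖ ^ 4 ≤ 1 := pow_le_one₀ (norm_nonneg _) hx
  have hN : (0 : ℝ) ≤ 2 ^ Fintype.card ι := by positivity
  rw [← sq_le_sq₀ (norm_nonneg _) (by positivity), mul_pow, Real.sq_sqrt hN]
  calc ‖rademacher x - truncateCoords (rademacher x)‖ ^ 2
      ≤ (∑ ε, rademacher x ε ^ 4) / 16 := norm_sub_truncateCoords_sq_le _
    _ ≤ 3 * 2 ^ Fintype.card ι * ‖x‖ ^ 4 / 16 := by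
        gcongr
        exact sum_rademacher_pow_four_le x
    _ ≤ (9 / 20) ^ 2 * 2 ^ Fintype.card ι := by nlinarith

lemma exists_sign_sum_mul_ge {m : Type*} [Fintype m] (c u : m → ℝ) (hu : ∀ i, |u i| ≤ 1) :
    ∃ s : m → ℝ, (∀ i, s i = 1 ∨ s i = -1) ∧ ∑ i, c i * u i ≤ ∑ i, c i * s i := by
  refine ⟨fun i => if 0 ≤ c i then 1 else -1, fun i => by dsimp only; split_ifs <;> simp, ?_⟩
  refine sum_le_sum fun i _ => ?_
  have hcu : c i * u i ≤ |c i| :=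
    (le_abs_self _).trans <| by
      simpa [abs_mul] using mul_le_mul_of_nonneg_left (hu i) (abs_nonneg (c i))
  dsimp only
  split_ifs with hc
  · simpa [abs_of_nonneg hc] using hcu
  · simpa [abs_of_neg (not_le.mp hc)] using hcu

section Bounds

variable {m n : Type*} [Fintype m] [Fintype n] (a : Matrix m n ℝ)

def SignBounded (K : ℝ) : Prop :=
  ∀ (s : m → ℝ) (t : n → ℝ), (∀ i, s i = 1 ∨ s i = -1) →
    (∀ j, t j = 1 ∨ t j = -1) → ∑ i, ∑ j, a i j * s i * t j ≤ K

def VectorBounded (M : ℝ) : Prop :=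
  ∀ (ι : Type) [Fintype ι] (x : m → EuclideanSpace ℝ ι) (y : n → EuclideanSpace ℝ ι),
    (∀ i, ‖x i‖ ≤ 1) → (∀ j, ‖y j‖ ≤ 1) →
      ∑ i, ∑ j, a i j * ⟪x i, y j⟫ ≤ M

variable {a}

lemma SignBounded.sum_mul_mul_le {K : ℝ} (ha : SignBounded a K) {u : m → ℝ} {v : n → ℝ}
    (hu : ∀ i, |u i| ≤ 1) (hv : ∀ j, |v j| ≤ 1) :
    ∑ i, ∑ j, a i j * u i * v j ≤ K := by
  obtain ⟨s, hs, hsu⟩ := exists_sign_sum_mul_ge (fun i => ∑ j, a i j * v j) u hu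
  obtain ⟨t, ht, htv⟩ := exists_sign_sum_mul_ge (fun j => ∑ i, a i j * s i) v hv
  calc ∑ i, ∑ j, a i j * u i * v j = ∑ i, (∑ j, a i j * v j) * u i := by
        simp only [sum_mul]; exact sum_congr rfl fun i _ => sum_congr rfl fun j _ => by ring
    _ ≤ ∑ i, (∑ j, a i j * v j) * s i := hsu
    _ = ∑ j, (∑ i, a i j * s i) * v j := by
        simp only [sum_mul]
        rw [sum_comm]
        exact sum_congr rfl fun j _ => sum_congr rfl fun i _ => by ring
    _ ≤ ∑ j, (∑ i, a i j * s i) * t j := htv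
    _ = ∑ i, ∑ j, a i j * s i * t j := by simp only [sum_mul]; rw [sum_comm]
    _ ≤ K := ha s t hs ht

lemma SignBounded.sum_inner_truncateCoords_le {K : ℝ} (ha : SignBounded a K) {κ : Type*}
    [Fintype κ] (u : m → EuclideanSpace ℝ κ) (v : n → EuclideanSpace ℝ κ) :
    ∑ i, ∑ j, a i j * ⟪truncateCoords (u i), truncateCoords (v j)⟫ ≤
      Fintype.card κ * (16 * K) := by
  have hcoord (k : κ) :
      ∑ i, ∑ j, a i j * (truncate (u i k) * truncate (v j k)) ≤ 16 * K := by
    have h := ha.sum_mul_mul_le (u := fun i => truncate (u i k) / 4)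
      (v := fun j => truncate (v j k) / 4)
      (fun i => by
        rw [abs_div, abs_of_pos (four_pos : (0 : ℝ) < 4), div_le_one four_pos]
        exact abs_truncate_le _)
      (fun j => by
        rw [abs_div, abs_of_pos (four_pos : (0 : ℝ) < 4), div_le_one four_pos]
        exact abs_truncate_le _)
    calc ∑ i, ∑ j, a i j * (truncate (u i k) * truncate (v j k))
        = 16 * ∑ i, ∑ j, a i j * (truncate (u i k) / 4) * (truncate (v j k) / 4) := by
          rw [mul_sum]
          exact sum_congr rfl fun i _ => by rw [mul_sum]; exact sum_congr rfl fun j _ => by ring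
      _ ≤ 16 * K := by linarith
  calc ∑ i, ∑ j, a i j * ⟪truncateCoords (u i), truncateCoords (v j)⟫
      = ∑ k, ∑ i, ∑ j, a i j * (truncate (u i k) * truncate (v j k)) := by
        simp only [truncateCoords, PiLp.inner_apply, RCLike.inner_apply, conj_trivial, mul_sum]
        simp_rw [sum_comm (γ := κ), mul_comm (truncate ((v _).ofLp _))]
    _ ≤ ∑ _k : κ, 16 * K := sum_le_sum fun k _ => hcoord k
    _ = Fintype.card κ * (16 * K) := by simp

lemma vectorBounded_sum_abs (a : Matrix m n ℝ) : VectorBounded a (∑ i, ∑ j, |a i j|) := by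
  intro ι _ x y hx hy
  refine sum_le_sum fun i _ => sum_le_sum fun j _ => ?_
  calc a i j * ⟪x i, y j⟫ ≤ |a i j * ⟪x i, y j⟫| := le_abs_self _
    _ = |a i j| * |⟪x i, y j⟫| := abs_mul _ _
    _ ≤ |a i j| * 1 := by
        gcongr
        exact (abs_real_inner_le_norm _ _).trans (mul_le_one₀ (hx i) (norm_nonneg _) (hy j))
    _ = |a i j| := mul_one _

lemma VectorBounded.sum_inner_le_of_norm_le_one {M : ℝ} (hM : VectorBounded a M) {H : Type*}
    [NormedAddCommGroup H] [InnerProductSpace ℝ H] (x : m → H) (y : n → H)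
    (hx : ∀ i, ‖x i‖ ≤ 1) (hy : ∀ j, ‖y j‖ ≤ 1) :
    ∑ i, ∑ j, a i j * ⟪x i, y j⟫ ≤ M := by
  let V := Submodule.span ℝ (Set.range x ∪ Set.range y)
  have : FiniteDimensional ℝ V :=
    .span_of_finite ℝ ((Set.finite_range x).union (Set.finite_range y))
  let e := (stdOrthonormalBasis ℝ V).repr
  let x' (i : m) : V := ⟨x i, Submodule.subset_span (.inl ⟨i, rfl⟩)⟩
  let y' (j : n) : V := ⟨y j, Submodule.subset_span (.inr ⟨j, rfl⟩)⟩
  simpa [x', y', LinearIsometryEquiv.inner_map_map] using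
    hM _ (fun i => e (x' i)) (fun j => e (y' j)) (by simpa [x'] using hx) (by simpa [y'] using hy)

lemma VectorBounded.sum_inner_le {M : ℝ} (hM : VectorBounded a M) {H : Type*}
    [NormedAddCommGroup H] [InnerProductSpace ℝ H] {r r' : ℝ} (hr : 0 ≤ r) (hr' : 0 ≤ r')
    (x : m → H) (y : n → H) (hx : ∀ i, ‖x i‖ ≤ r) (hy : ∀ j, ‖y j‖ ≤ r') :
    ∑ i, ∑ j, a i j * ⟪x i, y j⟫ ≤ M * r * r' := by
  rcases hr.eq_or_lt with rfl | hr
  · simp [fun i => norm_le_zero_iff.mp (hx i)]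
  rcases hr'.eq_or_lt with rfl | hr'
  · simp [fun j => norm_le_zero_iff.mp (hy j)]
  have h := hM.sum_inner_le_of_norm_le_one (fun i => r⁻¹ • x i) (fun j => r'⁻¹ • y j)
    (fun i => by
      rw [norm_smul, norm_inv, Real.norm_of_nonneg hr.le]
      exact inv_mul_le_one_of_le₀ (hx i) hr.le)
    (fun j => by
      rw [norm_smul, norm_inv, Real.norm_of_nonneg hr'.le]
      exact inv_mul_le_one_of_le₀ (hy j) hr'.le)
  have hscale : ∑ i, ∑ j, a i j * ⟪r⁻¹ • x i, r'⁻¹ • y j⟫ =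
      (r * r')⁻¹ * ∑ i, ∑ j, a i j * ⟪x i, y j⟫ := by
    simp only [real_inner_smul_left, real_inner_smul_right, mul_sum]
    exact sum_congr rfl fun i _ => sum_congr rfl fun j _ => by ring
  rw [hscale, inv_mul_le_iff₀ (by positivity)] at h
  linarith

theorem SignBounded.vectorBounded_of_vectorBounded {K M : ℝ} (ha : SignBounded a K)
    (hM : VectorBounded a M) : VectorBounded a (16 * K + 9 / 10 * M) := by
  classical
  intro ι _ x y hx hy
  set N : ℝ := 2 ^ Fintype.card ι
  have hN : 0 < N := by positivity
  have hsqrt : √N * √N = N := Real.mul_self_sqrt hN.le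
  have hcard : (Fintype.card (ι → Bool) : ℝ) = N := by simp [N]
  set U := fun i => rademacher (x i)
  set V := fun j => rademacher (y j)
  set U' := fun i => truncateCoords (U i)
  set V' := fun j => truncateCoords (V j)
  have hU (i : m) : ‖U i‖ ≤ √N := by
    simpa [U, norm_rademacher] using mul_le_of_le_one_right (Real.sqrt_nonneg N) (hx i)
  have hV (j : n) : ‖V j‖ ≤ √N := by
    simpa [V, norm_rademacher] using mul_le_of_le_one_right (Real.sqrt_nonneg N) (hy j)
  have hU' (i : m) : ‖U' i‖ ≤ √N := (norm_truncateCoords_le _).trans (hU i)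
  have hUU' (i : m) : ‖U i - U' i‖ ≤ 9 / 20 * √N :=
    norm_rademacher_sub_truncateCoords_le (hx i)
  have hVV' (j : n) : ‖V j - V' j‖ ≤ 9 / 20 * √N :=
    norm_rademacher_sub_truncateCoords_le (hy j)
  have hsplit (i : m) (j : n) : N * ⟪x i, y j⟫ =
      ⟪U' i, V' j⟫ + ⟪U' i, V j - V' j⟫ + ⟪U i - U' i, V j⟫ := by
    rw [← inner_rademacher]
    simp only [inner_sub_left, inner_sub_right]
    ring
  have h₁ : ∑ i, ∑ j, a i j * ⟪U' i, V' j⟫ ≤ N * (16 * K) :=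
    hcard ▸ ha.sum_inner_truncateCoords_le U V
  have h₂ : ∑ i, ∑ j, a i j * ⟪U' i, V j - V' j⟫ ≤ 9 / 20 * N * M := calc
    _ ≤ M * √N * (9 / 20 * √N) := hM.sum_inner_le (by positivity) (by positivity) _ _ hU' hVV'
    _ = 9 / 20 * N * M := by linear_combination 9 / 20 * M * hsqrt
  have h₃ : ∑ i, ∑ j, a i j * ⟪U i - U' i, V j⟫ ≤ 9 / 20 * N * M := calc
    _ ≤ M * (9 / 20 * √N) * √N := hM.sum_inner_le (by positivity) (by positivity) _ _ hUU' hV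
    _ = 9 / 20 * N * M := by linear_combination 9 / 20 * M * hsqrt
  have hsum : N * ∑ i, ∑ j, a i j * ⟪x i, y j⟫ =
      ∑ i, ∑ j, a i j * ⟪U' i, V' j⟫ + ∑ i, ∑ j, a i j * ⟪U' i, V j - V' j⟫
        + ∑ i, ∑ j, a i j * ⟪U i - U' i, V j⟫ := by
    simp only [mul_sum, ← sum_add_distrib]
    exact sum_congr rfl fun i _ => sum_congr rfl fun j _ => by rw [mul_left_comm, hsplit]; ring
  refine le_of_mul_le_mul_left ?_ hN
  rw [hsum]
  linarith

theorem SignBounded.vectorBounded {K : ℝ} (ha : SignBounded a K) :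
    VectorBounded a (160 * K) := by
  intro ι _ x y hx hy
  set B := {M | VectorBounded a M}
  have hne : B.Nonempty := ⟨_, vectorBounded_sum_abs a⟩
  have hbdd : BddBelow B := ⟨_, fun M hM => hM ι x y hx hy⟩
  have hinf : VectorBounded a (sInf B) := fun κ _ u v hu hv =>
    le_csInf hne fun M hM => hM κ u v hu hv
  have hfix : sInf B ≤ 16 * K + 9 / 10 * sInf B :=
    csInf_le hbdd (ha.vectorBounded_of_vectorBounded hinf)
  linarith [hinf ι x y hx hy]

end Bounds

end Grothendieck

/-- Grothendieck's inequality (rescaled form): there is a universal constant K_G > 0 such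
that for any real matrix a with ∑ᵢⱼ aᵢⱼ sᵢ tⱼ ≤ K for all signs s, t ∈ {-1,1}ⁿ and any
vectors Sᵢ, Tⱼ in a real Hilbert space with ‖Sᵢ‖ ≤ R, ‖Tⱼ‖ ≤ R', one has
∑ᵢⱼ aᵢⱼ ⟨Sᵢ, Tⱼ⟩ ≤ K_G · K · R · R'. -/
theorem grothendieck_inequality_rescaled :
    ∃ KG : ℝ, 0 < KG ∧
      ∀ (n : ℕ) (H : Type) [NormedAddCommGroup H] [InnerProductSpace ℝ H]
        (a : Matrix (Fin n) (Fin n) ℝ) (K R R' : ℝ),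
        0 ≤ R → 0 ≤ R' →
        (∀ s t : Fin n → ℝ, (∀ i, s i = 1 ∨ s i = -1) → (∀ j, t j = 1 ∨ t j = -1) →
          (∑ i, ∑ j, a i j * s i * t j) ≤ K) →
        ∀ S T : Fin n → H, (∀ i, ‖S i‖ ≤ R) → (∀ j, ‖T j‖ ≤ R') →
          (∑ i, ∑ j, a i j * (inner ℝ (S i) (T j) : ℝ)) ≤ KG * K * R * R' :=
  ⟨160, by norm_num, fun _ _ _ _ _ _ _ _ hR hR' ha S T hS hT =>
    (Grothendieck.SignBounded.vectorBounded ha).sum_inner_le hR hR' S T hS hT⟩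
end
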